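/- arXiv:1210.3958 — 5 statements merged into one kernel-verified Lean document; each statement's English description precedes it below -/
import Mathlib

section
/- Let α, β > −1 and κ, λ, δ, η ∈ ℂ with δ² = λ + (α+1)² and η² = λ + (β+1)². Let u : (0,1) → ℂ be twice differentiable and define f on (−1,1) by f(x) = (1−x)^{−(α+δ+1)/2} (1+x)^{−(β+η+1)/2} u((1+x)/2). Then f satisfies (Tf)(x) = λ f(x) for all x ∈ (−1,1) if and only if u satisfies the hypergeometric differential equation t(1−t) u''(t) + [c̃ − (ã+b̃+1) t] u'(t) − ã b̃ u(t) = 0 for all t ∈ (0,1), where ã = ½(1−δ−η−κ), b̃ = ½(1−δ−η+κ), c̃ = 1−η. -/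
noncomputable section
open MeasureTheory Asymptotics Filter

/-- Pochhammer symbol `(a)_k` in `ℂ`. -/
def poch (a : ℂ) (k : ℕ) : ℂ := ∏ i ∈ Finset.range k, (a + i)

/-- Pochhammer symbol `(a)_k` in `ℝ`. -/
def pochR (a : ℝ) (k : ℕ) : ℝ := ∏ i ∈ Finset.range k, (a + i)

/-- Gauss hypergeometric series `₂F₁(a,b;c;z)`. -/
def F21 (a b c z : ℂ) : ℂ :=
  ∑' k : ℕ, poch a k * poch b k / (poch c k * (Nat.factorial k : ℂ)) * z ^ k

/-- The differential operator `T = T^{(α,β;κ)}`. -/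
def Tdiff (α β : ℝ) (κ : ℂ) (f : ℝ → ℂ) (x : ℝ) : ℂ :=
  ((1 - x ^ 2 : ℝ) : ℂ) ^ 2 * deriv (deriv f) x
    + ((1 - x ^ 2 : ℝ) : ℂ) * ((β : ℂ) - (α : ℂ) - ((α : ℂ) + (β : ℂ) + 4) * (x : ℂ)) * deriv f x
    + (1 / 4) * (κ ^ 2 - ((α : ℂ) + (β : ℂ) + 3) ^ 2) * ((1 - x ^ 2 : ℝ) : ℂ) * f x

/-- The normalized Jacobi weight `w^{(α,β)}`. -/
def wJ (α β : ℝ) (x : ℝ) : ℝ :=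
  2 ^ (-α - β - 1) * Real.Gamma (α + β + 2) / (Real.Gamma (α + 1) * Real.Gamma (β + 1))
    * (1 - x) ^ α * (1 + x) ^ β

/-- The `c`-function `c(x;y)` (with parameter `κ`). -/
def cfun (κ x y : ℂ) : ℂ :=
  Complex.Gamma (1 + y) * Complex.Gamma (-x)
    / (Complex.Gamma ((1 + y - x + κ) / 2) * Complex.Gamma ((1 + y - x - κ) / 2))

/-- The eigenfunction `φ⁺_λ`; `φ⁻_λ` is obtained by replacing `η` with `-η`. -/
def phiP (α β : ℝ) (κ δ η : ℂ) (x : ℝ) : ℂ :=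
  (((1 - x) / 2 : ℝ) : ℂ) ^ (-((α : ℂ) + δ + 1) / 2)
    * (((1 + x) / 2 : ℝ) : ℂ) ^ (-((β : ℂ) - η + 1) / 2)
    * F21 ((1 - δ + η - κ) / 2) ((1 - δ + η + κ) / 2) (1 + η) (((1 + x) / 2 : ℝ) : ℂ)

/-- The eigenfunction `ψ⁺_λ`; `ψ⁻_λ` is obtained by replacing `δ` with `-δ`. -/
def psiP (α β : ℝ) (κ δ η : ℂ) (x : ℝ) : ℂ :=
  (((1 - x) / 2 : ℝ) : ℂ) ^ (-((α : ℂ) - δ + 1) / 2)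
    * (((1 + x) / 2 : ℝ) : ℂ) ^ (-((β : ℂ) + η + 1) / 2)
    * F21 ((1 + δ - η - κ) / 2) ((1 + δ - η + κ) / 2) (1 + δ) (((1 - x) / 2 : ℝ) : ℂ)

/-- The constant `C` from the weighted Wronskian. -/
def Cconst (α β : ℝ) : ℝ :=
  2 ^ (-α - β - 1) * Real.Gamma (α + β + 2) / (Real.Gamma (α + 1) * Real.Gamma (β + 1))

/-- The function `p(x) = C (1-x)^{α+2} (1+x)^{β+2}`. -/
def pfun (α β : ℝ) (x : ℝ) : ℝ := Cconst α β * (1 - x) ^ (α + 2) * (1 + x) ^ (β + 2)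

def jacobiGauge (r s : ℂ) (w : ℝ → ℂ) (y : ℝ) : ℂ :=
  ((1 - y : ℝ) : ℂ) ^ r * ((1 + y : ℝ) : ℂ) ^ s * w ((1 + y) / 2)

def jacobiGaugeDeriv (r s : ℂ) (w : ℝ → ℂ) (y : ℝ) : ℂ :=
  -r * jacobiGauge (r - 1) s w y + s * jacobiGauge r (s - 1) w y + jacobiGauge r s (deriv w) y / 2

def hypergeometricODE (a b c : ℂ) (u : ℝ → ℂ) (t : ℝ) : ℂ :=
  (t : ℂ) * (1 - (t : ℂ)) * deriv (deriv u) t + (c - (a + b + 1) * (t : ℂ)) * deriv u t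
    - a * b * u t

lemma Complex.cpow_sub_one_mul_self {z : ℂ} (hz : z ≠ 0) (r : ℂ) : z ^ (r - 1) * z = z ^ r := by
  rw [Complex.cpow_sub _ _ hz, Complex.cpow_one, div_mul_cancel₀ _ hz]

lemma mem_Ioo_zero_one_of_mem_Ioo {x : ℝ} (hx : x ∈ Set.Ioo (-1 : ℝ) 1) :
    (1 + x) / 2 ∈ Set.Ioo (0 : ℝ) 1 :=
  ⟨by linarith [hx.1], by linarith [hx.2]⟩

section JacobiGauge

variable {r s : ℂ} {w : ℝ → ℂ} {x : ℝ}

lemma hasDerivAt_jacobiGauge (hx : x ∈ Set.Ioo (-1 : ℝ) 1)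
    (hw : DifferentiableAt ℝ w ((1 + x) / 2)) :
    HasDerivAt (jacobiGauge r s w) (jacobiGaugeDeriv r s w x) x := by
  have hl : HasDerivAt (fun y : ℝ => ((1 - y : ℝ) : ℂ) ^ r)
      (r * ((1 - x : ℝ) : ℂ) ^ (r - 1) * ((-1 : ℝ) : ℂ)) x := by
    have hpow := Complex.hasStrictDerivAt_cpow_const (c := r)
      (Complex.ofReal_mem_slitPlane.2 (by linarith [hx.2] : (0 : ℝ) < 1 - x))
    exact hpow.hasDerivAt.comp x
      (HasDerivAt.ofReal_comp (by simpa using (hasDerivAt_id x).const_sub 1))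
  have hr : HasDerivAt (fun y : ℝ => ((1 + y : ℝ) : ℂ) ^ s)
      (s * ((1 + x : ℝ) : ℂ) ^ (s - 1) * ((1 : ℝ) : ℂ)) x := by
    have hpow := Complex.hasStrictDerivAt_cpow_const (c := s)
      (Complex.ofReal_mem_slitPlane.2 (by linarith [hx.1] : (0 : ℝ) < 1 + x))
    exact hpow.hasDerivAt.comp x
      (HasDerivAt.ofReal_comp (by simpa using (hasDerivAt_id x).const_add 1))
  have hw' : HasDerivAt (fun y : ℝ => w ((1 + y) / 2)) (((1 : ℝ) / 2) • deriv w ((1 + x) / 2)) x :=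
    hw.hasDerivAt.scomp x (by simpa using ((hasDerivAt_id x).const_add 1).div_const 2)
  refine ((hl.mul hr).mul hw').congr_deriv ?_
  simp only [jacobiGaugeDeriv, jacobiGauge, Complex.real_smul, Pi.mul_apply]
  push_cast
  ring

lemma deriv_jacobiGauge_eventuallyEq (hx : x ∈ Set.Ioo (-1 : ℝ) 1)
    (hw : ∀ t ∈ Set.Ioo (0 : ℝ) 1, DifferentiableAt ℝ w t) :
    deriv (jacobiGauge r s w) =ᶠ[nhds x] jacobiGaugeDeriv r s w :=
  Filter.eventuallyEq_of_mem (Ioo_mem_nhds hx.1 hx.2) fun _ hy =>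
    (hasDerivAt_jacobiGauge hy (hw _ (mem_Ioo_zero_one_of_mem_Ioo hy))).deriv

lemma hasDerivAt_jacobiGaugeDeriv (hx : x ∈ Set.Ioo (-1 : ℝ) 1)
    (hw : DifferentiableAt ℝ w ((1 + x) / 2)) (hw' : DifferentiableAt ℝ (deriv w) ((1 + x) / 2)) :
    HasDerivAt (jacobiGaugeDeriv r s w)
      (-r * jacobiGaugeDeriv (r - 1) s w x + s * jacobiGaugeDeriv r (s - 1) w x
        + jacobiGaugeDeriv r s (deriv w) x / 2) x :=
  (((hasDerivAt_jacobiGauge hx hw).const_mul (-r)).add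
    ((hasDerivAt_jacobiGauge hx hw).const_mul s)).add
    ((hasDerivAt_jacobiGauge hx hw').div_const 2)

lemma deriv_deriv_jacobiGauge (hx : x ∈ Set.Ioo (-1 : ℝ) 1)
    (hw : ∀ t ∈ Set.Ioo (0 : ℝ) 1, DifferentiableAt ℝ w t)
    (hw' : DifferentiableAt ℝ (deriv w) ((1 + x) / 2)) :
    deriv (deriv (jacobiGauge r s w)) x
      = -r * jacobiGaugeDeriv (r - 1) s w x + s * jacobiGaugeDeriv r (s - 1) w x
        + jacobiGaugeDeriv r s (deriv w) x / 2 := by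
  rw [(deriv_jacobiGauge_eventuallyEq hx hw).deriv_eq]
  exact (hasDerivAt_jacobiGaugeDeriv hx (hw _ (mem_Ioo_zero_one_of_mem_Ioo hx)) hw').deriv

lemma jacobiGauge_eq_zero_iff (hx : x ∈ Set.Ioo (-1 : ℝ) 1) :
    jacobiGauge r s w x = 0 ↔ w ((1 + x) / 2) = 0 := by
  have hl : ((1 - x : ℝ) : ℂ) ≠ 0 := Complex.ofReal_ne_zero.2 (by linarith [hx.2])
  have hr : ((1 + x : ℝ) : ℂ) ≠ 0 := Complex.ofReal_ne_zero.2 (by linarith [hx.1])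
  simp only [jacobiGauge, mul_eq_zero, Complex.cpow_eq_zero_iff, hl, hr, false_and, false_or]

end JacobiGauge

/-- The gauge exponents `-(α+δ+1)/2` and `-(β+η+1)/2` are the roots of the indicial equations of
`T - λ` at `x = 1` and `x = -1`; this is what turns `T - λ` into the hypergeometric operator. -/
theorem Tdiff_jacobiGauge_sub_mul {α β : ℝ} {κ lam δ η : ℂ}
    (hδ : δ ^ 2 = lam + ((α : ℂ) + 1) ^ 2) (hη : η ^ 2 = lam + ((β : ℂ) + 1) ^ 2) {u : ℝ → ℂ}
    (hu : ∀ t ∈ Set.Ioo (0 : ℝ) 1, DifferentiableAt ℝ u t ∧ DifferentiableAt ℝ (deriv u) t)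
    {x : ℝ} (hx : x ∈ Set.Ioo (-1 : ℝ) 1) :
    Tdiff α β κ (jacobiGauge (-((α : ℂ) + δ + 1) / 2) (-((β : ℂ) + η + 1) / 2) u) x
        - lam * jacobiGauge (-((α : ℂ) + δ + 1) / 2) (-((β : ℂ) + η + 1) / 2) u x
      = ((1 - x ^ 2 : ℝ) : ℂ) * jacobiGauge (-((α : ℂ) + δ + 1) / 2) (-((β : ℂ) + η + 1) / 2)
          (hypergeometricODE ((1 - δ - η - κ) / 2) ((1 - δ - η + κ) / 2) (1 - η) u) x := by
  set p : ℂ := -((α : ℂ) + δ + 1) / 2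
  set q : ℂ := -((β : ℂ) + η + 1) / 2
  have ht := mem_Ioo_zero_one_of_mem_Ioo hx
  have hl : ((1 - x : ℝ) : ℂ) ≠ 0 := Complex.ofReal_ne_zero.2 (by linarith [hx.2])
  have hr : ((1 + x : ℝ) : ℂ) ≠ 0 := Complex.ofReal_ne_zero.2 (by linarith [hx.1])
  rw [Tdiff, deriv_deriv_jacobiGauge hx (fun t ht => (hu t ht).1) (hu _ ht).2,
    (hasDerivAt_jacobiGauge hx (hu _ ht).1).deriv]
  simp only [jacobiGaugeDeriv, jacobiGauge, hypergeometricODE]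
  rw [← Complex.cpow_sub_one_mul_self hl p, ← Complex.cpow_sub_one_mul_self hl (p - 1),
    ← Complex.cpow_sub_one_mul_self hr q, ← Complex.cpow_sub_one_mul_self hr (q - 1)]
  push_cast
  linear_combination
    ((1 - (x : ℂ)) ^ (p - 1 - 1) * (1 + (x : ℂ)) ^ (q - 1 - 1) * (1 - (x : ℂ)) ^ 2
      * (1 + (x : ℂ)) ^ 2 * u ((1 + x) / 2) / 2) * ((1 + (x : ℂ)) * hδ + (1 - (x : ℂ)) * hη)

theorem stmt_6_general (α β : ℝ) (κ lam δ η : ℂ)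
    (hδ : δ ^ 2 = lam + ((α : ℂ) + 1) ^ 2) (hη : η ^ 2 = lam + ((β : ℂ) + 1) ^ 2)
    (u : ℝ → ℂ)
    (hu : ∀ t ∈ Set.Ioo (0 : ℝ) 1, DifferentiableAt ℝ u t ∧ DifferentiableAt ℝ (deriv u) t) :
    (∀ x ∈ Set.Ioo (-1 : ℝ) 1,
        Tdiff α β κ
          (fun y => ((1 - y : ℝ) : ℂ) ^ (-((α : ℂ) + δ + 1) / 2)
            * ((1 + y : ℝ) : ℂ) ^ (-((β : ℂ) + η + 1) / 2) * u ((1 + y) / 2)) x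
          = lam * (((1 - x : ℝ) : ℂ) ^ (-((α : ℂ) + δ + 1) / 2)
            * ((1 + x : ℝ) : ℂ) ^ (-((β : ℂ) + η + 1) / 2) * u ((1 + x) / 2)))
    ↔
    (∀ t ∈ Set.Ioo (0 : ℝ) 1,
        (t : ℂ) * (1 - (t : ℂ)) * deriv (deriv u) t
          + ((1 - η) - ((1 - δ - η - κ) / 2 + (1 - δ - η + κ) / 2 + 1) * (t : ℂ)) * deriv u t
          - ((1 - δ - η - κ) / 2) * ((1 - δ - η + κ) / 2) * u t = 0) := by
  set H := hypergeometricODE ((1 - δ - η - κ) / 2) ((1 - δ - η + κ) / 2) (1 - η) u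
  have hpoint : ∀ x ∈ Set.Ioo (-1 : ℝ) 1,
      Tdiff α β κ (jacobiGauge (-((α : ℂ) + δ + 1) / 2) (-((β : ℂ) + η + 1) / 2) u) x
          = lam * jacobiGauge (-((α : ℂ) + δ + 1) / 2) (-((β : ℂ) + η + 1) / 2) u x
        ↔ H ((1 + x) / 2) = 0 := fun x hx => by
    have hx2 : ((1 - x ^ 2 : ℝ) : ℂ) ≠ 0 :=
      Complex.ofReal_ne_zero.2 (by nlinarith [hx.1, hx.2])
    rw [← sub_eq_zero, Tdiff_jacobiGauge_sub_mul hδ hη hu hx, mul_eq_zero, or_iff_right hx2,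
      jacobiGauge_eq_zero_iff hx]
  change (∀ x ∈ Set.Ioo (-1 : ℝ) 1, _) ↔ ∀ t ∈ Set.Ioo (0 : ℝ) 1, H t = 0
  constructor
  · intro hT t ht
    have hx : 2 * t - 1 ∈ Set.Ioo (-1 : ℝ) 1 := ⟨by linarith [ht.1], by linarith [ht.2]⟩
    simpa [show (1 + (2 * t - 1)) / 2 = t by ring] using (hpoint _ hx).1 (hT _ hx)
  · exact fun hH x hx => (hpoint x hx).2 (hH _ (mem_Ioo_zero_one_of_mem_Ioo hx))

/-- after the substitution
`f(x) = (1−x)^{−(α+δ+1)/2} (1+x)^{−(β+η+1)/2} u((1+x)/2)`, the eigenvalue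
equation `Tf = λf` on `(-1,1)` is equivalent to the hypergeometric differential
equation for `u` on `(0,1)` with parameters
`ã = ½(1−δ−η−κ)`, `b̃ = ½(1−δ−η+κ)`, `c̃ = 1−η`. -/
theorem stmt_6 (α β : ℝ) (hα : -1 < α) (hβ : -1 < β) (κ lam δ η : ℂ)
    (hδ : δ ^ 2 = lam + ((α : ℂ) + 1) ^ 2) (hη : η ^ 2 = lam + ((β : ℂ) + 1) ^ 2)
    (u : ℝ → ℂ)
    (hu : ∀ t ∈ Set.Ioo (0 : ℝ) 1, DifferentiableAt ℝ u t ∧ DifferentiableAt ℝ (deriv u) t) :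
    (∀ x ∈ Set.Ioo (-1 : ℝ) 1,
        Tdiff α β κ
          (fun y => ((1 - y : ℝ) : ℂ) ^ (-((α : ℂ) + δ + 1) / 2)
            * ((1 + y : ℝ) : ℂ) ^ (-((β : ℂ) + η + 1) / 2) * u ((1 + y) / 2)) x
          = lam * (((1 - x : ℝ) : ℂ) ^ (-((α : ℂ) + δ + 1) / 2)
            * ((1 + x : ℝ) : ℂ) ^ (-((β : ℂ) + η + 1) / 2) * u ((1 + x) / 2)))
    ↔
    (∀ t ∈ Set.Ioo (0 : ℝ) 1,
        (t : ℂ) * (1 - (t : ℂ)) * deriv (deriv u) t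
          + ((1 - η) - ((1 - δ - η - κ) / 2 + (1 - δ - η + κ) / 2 + 1) * (t : ℂ)) * deriv u t
          - ((1 - δ - η - κ) / 2) * ((1 - δ - η + κ) / 2) * u t = 0) :=
  stmt_6_general α β κ lam δ η hδ hη u hu
end
end

section
/- Let α, β > −1 and κ, λ, δ, η ∈ ℂ with δ² = λ + (α+1)², η² = λ + (β+1)², and η ∉ ℤ. Then for every x ∈ (−1,1), p(x) · ( (φ⁻_λ)'(x) φ⁺_λ(x) − φ⁻_λ(x) (φ⁺_λ)'(x) ) = −η D, where D = 2^{α+β+3} C; in particular the weighted Wronskian [φ⁻_λ, φ⁺_λ] is constant on (−1,1). -/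
noncomputable section
open MeasureTheory Asymptotics Filter

/-!
Put `u = (1 + x) / 2`, `a, b = (1 - δ + η ∓ κ) / 2` and `c = 1 + η`. Both eigenfunctions share
the factor `h = ((1 - x) / 2) ^ (-(α + δ + 1) / 2) * u ^ (-(β - η + 1) / 2)`: `φ⁺ = h · y₁(u)` and
`φ⁻ = h · y₂(u)`, where `y₁ = ₂F₁(a, b; c; ·)` and
`y₂ = z ^ (1 - c) ₂F₁(a - c + 1, b - c + 1; 2 - c; ·)` are the two Frobenius solutions at `0` of
the hypergeometric equation. So the Wronskian of `φ⁻, φ⁺` is `h² · u'` times the Wronskian of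
`y₂, y₁` at `u`, and by Abel's identity the latter is `(1 - c) u ^ (-c) (1 - u) ^ (c - a - b - 1)`;
against the weight `p` all powers of `1 ± x` cancel. Abel's identity holds on the whole unit disc:
by the hypergeometric equation, `(1 - z) ^ (a + b - c + 1)` times `z ^ c W(y₂, y₁)` has zero
derivative there, and at `z = 0` it equals `1 - c`.
-/

open Topology

def seriesSum (g : ℕ → ℂ) (z : ℂ) : ℂ := ∑' k, g k * z ^ k

def derivCoeff (g : ℕ → ℂ) (k : ℕ) : ℂ := (k + 1) * g (k + 1)

theorem seriesSum_zero (g : ℕ → ℂ) : seriesSum g 0 = g 0 := by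
  rw [seriesSum, tsum_eq_single 0 fun k hk => by simp [hk]]
  simp

/-- `OneLeRadius g` says that `1 ≤ (FormalMultilinearSeries.ofScalars ℂ g).radius`. -/
def OneLeRadius (g : ℕ → ℂ) : Prop :=
  ∀ r : ℝ, 0 < r → r < 1 → Summable fun k => ‖g k‖ * r ^ k

namespace OneLeRadius

variable {g g' : ℕ → ℂ}

theorem of_ratio {q : ℕ → ℂ} (hrec : ∀ k, g (k + 1) = q k * g k)
    (hq : Tendsto (fun k => ‖q k‖) atTop (𝓝 1)) : OneLeRadius g := by
  intro r hr0 hr1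
  have hρ : (1 + r) / 2 < 1 := by linarith
  refine summable_of_ratio_norm_eventually_le hρ ?_
  have hq' : ∀ᶠ k in atTop, ‖q k‖ * r ≤ (1 + r) / 2 :=
    (hq.eventually_lt_const (by rw [lt_div_iff₀ hr0]; linarith :
      (1 : ℝ) < (1 + r) / 2 / r)).mono fun k hk => ((lt_div_iff₀ hr0).1 hk).le
  filter_upwards [hq'] with k hk
  rw [Real.norm_of_nonneg (by positivity), Real.norm_of_nonneg (by positivity), hrec, norm_mul,
    pow_succ]
  calc ‖q k‖ * ‖g k‖ * (r ^ k * r) = (‖q k‖ * r) * (‖g k‖ * r ^ k) := by ring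
    _ ≤ (1 + r) / 2 * (‖g k‖ * r ^ k) := by gcongr

theorem mono (hg : OneLeRadius g) (h : ∀ k, ‖g' k‖ ≤ ‖g k‖) : OneLeRadius g' := fun r hr0 hr1 =>
  (hg r hr0 hr1).of_nonneg_of_le (fun k => by positivity) fun k => by gcongr; exact h k

theorem shift (hg : OneLeRadius g) : OneLeRadius fun k => g (k + 1) := by
  intro r hr0 hr1
  refine (((summable_nat_add_iff 1).2 (hg r hr0 hr1)).div_const r).congr fun k => ?_
  rw [pow_succ]
  field_simp

theorem natCast_add_one_mul (hg : OneLeRadius g) : OneLeRadius fun k => ((k : ℂ) + 1) * g k := by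
  intro r hr0 hr1
  set R := (1 + r) / 2 with hR
  have hR0 : 0 < R := by positivity
  have hrR : r / R < 1 := by rw [div_lt_one hR0]; linarith
  -- the polynomial factor is absorbed by passing from `r` to the larger radius `R`
  obtain ⟨M, hM⟩ : BddAbove (Set.range fun k : ℕ => ((k : ℝ) + 1) * (r / R) ^ k) := by
    have h := (summable_pow_mul_geometric_of_norm_lt_one 1
      (by rwa [Real.norm_of_nonneg (by positivity)] : ‖r / R‖ < 1)).add
      (summable_geometric_of_lt_one (by positivity) hrR)
    simp only [pow_one, ← add_one_mul] at h
    exact h.tendsto_atTop_zero.bddAbove_range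
  refine ((hg R hR0 (by linarith)).mul_left M).of_nonneg_of_le (fun k => by positivity)
    fun k => ?_
  have hnorm : ‖((k : ℂ) + 1)‖ = (k : ℝ) + 1 := by exact_mod_cast Complex.norm_natCast (k + 1)
  calc ‖((k : ℂ) + 1) * g k‖ * r ^ k = (((k : ℝ) + 1) * (r / R) ^ k) * (‖g k‖ * R ^ k) := by
        rw [norm_mul, hnorm, div_pow]; field_simp
    _ ≤ M * (‖g k‖ * R ^ k) := by gcongr; exact hM (Set.mem_range_self k)

theorem natCast_mul (hg : OneLeRadius g) : OneLeRadius fun k => (k : ℂ) * g k :=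
  hg.natCast_add_one_mul.mono fun k => by
    rw [norm_mul, norm_mul, Complex.norm_natCast]
    gcongr
    rw [show ((k : ℂ) + 1) = ((k + 1 : ℕ) : ℂ) by push_cast; rfl, Complex.norm_natCast]
    push_cast
    linarith

theorem derivSeries (hg : OneLeRadius g) : OneLeRadius (derivCoeff g) :=
  hg.shift.natCast_add_one_mul

theorem summable (hg : OneLeRadius g) {z : ℂ} (hz : ‖z‖ < 1) :
    Summable fun k => g k * z ^ k := by
  refine .of_norm <| (hg ((‖z‖ + 1) / 2) (by positivity) (by linarith)).of_nonneg_of_le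
    (fun k => norm_nonneg _) fun k => ?_
  rw [norm_mul, norm_pow]
  gcongr
  linarith

theorem hasSum (hg : OneLeRadius g) {z : ℂ} (hz : ‖z‖ < 1) :
    HasSum (fun k => g k * z ^ k) (seriesSum g z) :=
  (hg.summable hz).hasSum

theorem hasDerivAt (hg : OneLeRadius g) {z : ℂ} (hz : ‖z‖ < 1) :
    HasDerivAt (seriesSum g) (seriesSum (derivCoeff g) z) z := by
  set r := (‖z‖ + 1) / 2 with hr
  have hr0 : 0 < r := by positivity
  have hzr : z ∈ Metric.ball (0 : ℂ) r := by rw [mem_ball_zero_iff]; linarith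
  have hbound : ∀ k (y : ℂ), y ∈ Metric.ball (0 : ℂ) r →
      ‖g k * (k * y ^ (k - 1))‖ ≤ ‖(k : ℂ) * g k‖ * r ^ (k - 1) := by
    intro k y hy
    rw [mem_ball_zero_iff] at hy
    rw [norm_mul, norm_mul, norm_mul, norm_pow, mul_left_comm, mul_assoc]
    gcongr
  have hsum : Summable fun k : ℕ => ‖(k : ℂ) * g k‖ * r ^ (k - 1) := by
    refine (summable_nat_add_iff 1).1 <| (hg.derivSeries r hr0 (by linarith)).congr fun k => ?_
    simp [derivCoeff]
  have hderiv := hasDerivAt_tsum_of_isPreconnected hsum Metric.isOpen_ball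
    (convex_ball (0 : ℂ) r).isPreconnected
    (fun k y _ => (hasDerivAt_pow k y).const_mul (g k)) hbound (Metric.mem_ball_self hr0)
    (hg.summable (by simp)) hzr
  refine hderiv.congr_deriv ?_
  rw [(Summable.of_norm_bounded hsum fun k => hbound k z hzr).tsum_eq_zero_add]
  simp only [seriesSum, derivCoeff, CharP.cast_eq_zero, zero_mul, mul_zero, zero_add,
    Nat.cast_add, Nat.cast_one, add_tsub_cancel_right]
  exact tsum_congr fun k => by ring

theorem mul_seriesSum_derivCoeff (hg : OneLeRadius g) {z : ℂ} (hz : ‖z‖ < 1) :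
    z * seriesSum (derivCoeff g) z = seriesSum (fun k => k * g k) z := by
  rw [seriesSum, seriesSum, (hg.natCast_mul.summable hz).tsum_eq_zero_add, ← tsum_mul_left]
  simp only [derivCoeff, Nat.cast_zero, zero_mul, zero_add, Nat.cast_add, Nat.cast_one]
  exact tsum_congr fun k => by ring

theorem deriv_seriesSum (hg : OneLeRadius g) :
    Set.EqOn (deriv (seriesSum g)) (seriesSum (derivCoeff g)) (Metric.ball 0 1) :=
  fun _ hz => (hg.hasDerivAt (mem_ball_zero_iff.1 hz)).deriv

theorem hasDerivAt_deriv (hg : OneLeRadius g) {z : ℂ} (hz : ‖z‖ < 1) :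
    HasDerivAt (deriv (seriesSum g)) (seriesSum (derivCoeff (derivCoeff g)) z) z :=
  (hg.derivSeries.hasDerivAt hz).congr_of_eventuallyEq <|
    Filter.eventuallyEq_of_mem (Metric.isOpen_ball.mem_nhds (mem_ball_zero_iff.2 hz))
      hg.deriv_seriesSum

end OneLeRadius

def hypCoeff (a b c : ℂ) (k : ℕ) : ℂ := poch a k * poch b k / (poch c k * (Nat.factorial k : ℂ))

theorem F21_eq_seriesSum (a b c : ℂ) : F21 a b c = seriesSum (hypCoeff a b c) := rfl

section Hypergeometric

variable {a b c : ℂ}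

theorem hypCoeff_zero : hypCoeff a b c 0 = 1 := by simp [hypCoeff, poch]

theorem hypCoeff_succ (hc : ∀ k : ℕ, c + k ≠ 0) (k : ℕ) :
    hypCoeff a b c (k + 1) = (a + k) / (c + k) * ((b + k) / (1 + k)) * hypCoeff a b c k := by
  have hpoch : poch c k ≠ 0 := Finset.prod_ne_zero_iff.2 fun i _ => hc i
  have hk : (1 : ℂ) + k ≠ 0 := by exact_mod_cast (by omega : 1 + k ≠ 0)
  simp only [hypCoeff, poch, Finset.prod_range_succ, Nat.factorial_succ, Nat.cast_mul,
    Nat.cast_succ]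
  field_simp [hc k]
  ring

theorem oneLeRadius_hypCoeff (hc : ∀ k : ℕ, c + k ≠ 0) : OneLeRadius (hypCoeff a b c) := by
  refine .of_ratio (hypCoeff_succ hc) ?_
  have hlim (w v : ℂ) : Tendsto (fun k : ℕ => (w + k) / (v + k)) atTop (𝓝 1) := by
    simpa using tendsto_add_mul_div_add_mul_atTop_nhds w v (1 : ℂ) one_ne_zero
  simpa using ((hlim a c).mul (hlim b 1)).norm

theorem F21_zero : F21 a b c 0 = 1 := by
  rw [F21_eq_seriesSum, seriesSum_zero, hypCoeff_zero]

theorem hasDerivAt_F21 (hc : ∀ k : ℕ, c + k ≠ 0) {z : ℂ} (hz : ‖z‖ < 1) :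
    HasDerivAt (F21 a b c) (deriv (F21 a b c) z) z :=
  ((oneLeRadius_hypCoeff hc).hasDerivAt hz).differentiableAt.hasDerivAt

theorem hasDerivAt_deriv_F21 (hc : ∀ k : ℕ, c + k ≠ 0) {z : ℂ} (hz : ‖z‖ < 1) :
    HasDerivAt (deriv (F21 a b c)) (deriv (deriv (F21 a b c)) z) z :=
  ((oneLeRadius_hypCoeff hc).hasDerivAt_deriv hz).differentiableAt.hasDerivAt

theorem F21_ode (hc : ∀ k : ℕ, c + k ≠ 0) {z : ℂ} (hz : ‖z‖ < 1) :
    z * (1 - z) * deriv (deriv (F21 a b c)) z + (c - (a + b + 1) * z) * deriv (F21 a b c) z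
      - a * b * F21 a b c z = 0 := by
  set g := hypCoeff a b c
  have hg : OneLeRadius g := oneLeRadius_hypCoeff hc
  rw [F21_eq_seriesSum, (hg.hasDerivAt_deriv hz).deriv, (hg.hasDerivAt hz).deriv]
  have hg' : OneLeRadius fun k => ((k : ℂ) - 1) * g k := hg.natCast_add_one_mul.mono fun k => by
    rw [norm_mul, norm_mul]
    gcongr
    exact (norm_sub_le _ _).trans_eq (by simp; exact_mod_cast (Complex.norm_natCast (k + 1)).symm)
  have E₁ := hg.derivSeries.mul_seriesSum_derivCoeff hz
  have E₂ := hg.mul_seriesSum_derivCoeff hz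
  have E₃ := hg'.mul_seriesSum_derivCoeff hz
  have hshift : derivCoeff (fun k => ((k : ℂ) - 1) * g k) = fun k => k * derivCoeff g k := by
    ext k; simp only [derivCoeff]; push_cast; ring
  rw [hshift] at E₃
  have hsum := ((((hg.derivSeries.natCast_mul.hasSum hz).sub (hg'.natCast_mul.hasSum hz)).add
    ((hg.derivSeries.hasSum hz).mul_left c)).sub
    ((hg.natCast_mul.hasSum hz).mul_left (a + b + 1))).sub
    ((hg.hasSum hz).mul_left (a * b))
  have hterms : ∀ k : ℕ, k * derivCoeff g k * z ^ k - k * ((k - 1) * g k) * z ^ k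
      + c * (derivCoeff g k * z ^ k) - (a + b + 1) * (k * g k * z ^ k)
      - a * b * (g k * z ^ k) = 0 := by
    intro k
    have hk : (1 : ℂ) + k ≠ 0 := by exact_mod_cast (by omega : 1 + k ≠ 0)
    simp only [derivCoeff, g, hypCoeff_succ hc k]
    field_simp [hc k]
    ring
  simp only [hterms] at hsum
  linear_combination hsum.unique hasSum_zero + (1 - z) * E₁ - E₃ - (a + b + 1) * E₂

def hypSecondSolution (a b c z : ℂ) : ℂ := z ^ (1 - c) * F21 (a - c + 1) (b - c + 1) (2 - c) z

theorem hasDerivAt_hypSecondSolution (hc : ∀ k : ℕ, 2 - c + k ≠ 0) {z : ℂ} (hz : ‖z‖ < 1)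
    (hz' : z ∈ Complex.slitPlane) :
    HasDerivAt (hypSecondSolution a b c)
      ((1 - c) * z ^ (-c) * F21 (a - c + 1) (b - c + 1) (2 - c) z
        + z ^ (1 - c) * deriv (F21 (a - c + 1) (b - c + 1) (2 - c)) z) z := by
  refine (((hasDerivAt_id z).cpow_const hz').mul (hasDerivAt_F21 hc hz)).congr_deriv ?_
  simp only [id, mul_one, sub_sub_cancel_left]

/-- `z ^ c` times the Wronskian of the Frobenius solutions `hypSecondSolution a b c` and
`F21 a b c` of the hypergeometric equation; without the factor `z ^ (-c)` it is defined on the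
whole unit disc. -/
def hypWronskian (a b c z : ℂ) : ℂ :=
  (1 - c) * F21 (a - c + 1) (b - c + 1) (2 - c) z * F21 a b c z
    + z * (deriv (F21 (a - c + 1) (b - c + 1) (2 - c)) z * F21 a b c z
      - F21 (a - c + 1) (b - c + 1) (2 - c) z * deriv (F21 a b c) z)

variable (hc₁ : ∀ k : ℕ, c + k ≠ 0) (hc₂ : ∀ k : ℕ, 2 - c + k ≠ 0)
include hc₁ hc₂

theorem hasDerivAt_hypWronskian {z : ℂ} (hz : ‖z‖ < 1) :
    HasDerivAt (hypWronskian a b c)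
      ((a + b - c + 1) / (1 - z) * hypWronskian a b c z) z := by
  have hz1 : 1 - z ≠ 0 := sub_ne_zero.2 fun h => by simp [← h] at hz
  have hF := hasDerivAt_F21 (a := a) (b := b) hc₁ hz
  have hF' := hasDerivAt_deriv_F21 (a := a) (b := b) hc₁ hz
  have hG := hasDerivAt_F21 (a := a - c + 1) (b := b - c + 1) hc₂ hz
  have hG' := hasDerivAt_deriv_F21 (a := a - c + 1) (b := b - c + 1) hc₂ hz
  have odeF := F21_ode (a := a) (b := b) hc₁ hz
  have odeG := F21_ode (a := a - c + 1) (b := b - c + 1) hc₂ hz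
  refine (((hG.const_mul (1 - c)).mul hF).add
    ((hasDerivAt_id z).mul ((hG'.mul hF).sub (hG.mul hF')))).congr_deriv ?_
  simp only [hypWronskian, id, Pi.mul_apply, Pi.sub_apply]
  field_simp
  linear_combination F21 a b c z * odeG - F21 (a - c + 1) (b - c + 1) (2 - c) z * odeF

theorem one_sub_cpow_mul_hypWronskian {z : ℂ} (hz : ‖z‖ < 1) :
    (1 - z) ^ (a + b - c + 1) * hypWronskian a b c z = 1 - c := by
  have hslit : ∀ w : ℂ, ‖w‖ < 1 → 1 - w ∈ Complex.slitPlane := fun w hw =>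
    Complex.mem_slitPlane_iff.2 <| Or.inl <| by
      simpa using (Complex.re_le_norm w).trans_lt hw
  have hderiv : ∀ w : ℂ, ‖w‖ < 1 →
      HasDerivAt (fun w => (1 - w) ^ (a + b - c + 1) * hypWronskian a b c w) 0 w := by
    intro w hw
    have hw1 : 1 - w ≠ 0 := Complex.slitPlane_ne_zero (hslit w hw)
    refine ((((hasDerivAt_id w).const_sub 1).cpow_const (hslit w hw)).mul
      (hasDerivAt_hypWronskian hc₁ hc₂ hw)).congr_deriv ?_
    rw [id, Complex.cpow_sub _ _ hw1, Complex.cpow_one]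
    field_simp
    ring
  have hconst := Metric.isOpen_ball.is_const_of_deriv_eq_zero (convex_ball (0 : ℂ) 1).isPreconnected
    (fun w hw => (hderiv w (mem_ball_zero_iff.1 hw)).differentiableAt.differentiableWithinAt)
    (fun w hw => (hderiv w (mem_ball_zero_iff.1 hw)).deriv) (mem_ball_zero_iff.2 hz)
    (Metric.mem_ball_self one_pos)
  rw [hconst]
  simp [hypWronskian, F21_zero]

theorem hypSecondSolution_wronskian {z : ℂ} (hz : ‖z‖ < 1) (hz' : z ∈ Complex.slitPlane) :
    deriv (hypSecondSolution a b c) z * F21 a b c z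
      - hypSecondSolution a b c z * deriv (F21 a b c) z
      = (1 - c) * z ^ (-c) * (1 - z) ^ (c - a - b - 1) := by
  have hW := one_sub_cpow_mul_hypWronskian (a := a) (b := b) hc₁ hc₂ hz
  have hz0 : z ≠ 0 := Complex.slitPlane_ne_zero hz'
  have hpow : z ^ (1 - c) = z ^ (-c) * z := by
    rw [show 1 - c = -c + 1 by ring, Complex.cpow_add _ _ hz0, Complex.cpow_one]
  have hinv : (1 - z) ^ (c - a - b - 1) * (1 - z) ^ (a + b - c + 1) = 1 := by
    rw [← Complex.cpow_add _ _ (sub_ne_zero.2 fun h => by simp [← h] at hz)]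
    ring_nf
    exact Complex.cpow_zero _
  rw [(hasDerivAt_hypSecondSolution hc₂ hz hz').deriv, hypSecondSolution, hpow]
  linear_combination (norm := skip) (z ^ (-c) * (1 - z) ^ (c - a - b - 1)) * hW
    - z ^ (-c) * hypWronskian a b c z * hinv
  unfold hypWronskian
  ring

end Hypergeometric

theorem wronskian_mul_comp {h : ℝ → ℂ} {U : ℝ → ℝ} {y₁ y₂ : ℂ → ℂ} {x U' : ℝ}
    (hh : DifferentiableAt ℝ h x) (hU : HasDerivAt U U' x)
    (hy₁ : DifferentiableAt ℂ y₁ (U x)) (hy₂ : DifferentiableAt ℂ y₂ (U x)) :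
    deriv (fun t => h t * y₂ (U t)) x * (h x * y₁ (U x))
        - h x * y₂ (U x) * deriv (fun t => h t * y₁ (U t)) x
      = h x ^ 2 * U' * (deriv y₂ (U x) * y₁ (U x) - y₂ (U x) * deriv y₁ (U x)) := by
  have hcomp {y : ℂ → ℂ} (hy : DifferentiableAt ℂ y (U x)) :
      HasDerivAt (fun t => y (U t)) (U' * deriv y (U x)) x := by
    have h := hy.hasDerivAt.comp_ofReal.scomp x hU
    rw [Complex.real_smul] at h
    exact h
  rw [(hh.hasDerivAt.fun_mul (hcomp hy₂)).deriv, (hh.hasDerivAt.fun_mul (hcomp hy₁)).deriv]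
  ring

theorem cpow_mul_cpow_mul_cpow_mul_cpow_eq_one {z : ℂ} (hz : z ≠ 0) {p q r s : ℂ}
    (h : p + q + r + s = 0) : z ^ p * z ^ q * z ^ r * z ^ s = 1 := by
  rw [← Complex.cpow_add _ _ hz, ← Complex.cpow_add _ _ hz, ← Complex.cpow_add _ _ hz, h,
    Complex.cpow_zero]

section Eigenfunctions

variable (α β : ℝ) (κ δ η : ℂ)

def phiWeight (x : ℝ) : ℂ :=
  (((1 - x) / 2 : ℝ) : ℂ) ^ (-((α : ℂ) + δ + 1) / 2)
    * (((1 + x) / 2 : ℝ) : ℂ) ^ (-((β : ℂ) - η + 1) / 2)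

theorem phiP_eq_phiWeight_mul : phiP α β κ δ η = fun x => phiWeight α β δ η x
    * F21 ((1 - δ + η - κ) / 2) ((1 - δ + η + κ) / 2) (1 + η) (((1 + x) / 2 : ℝ) : ℂ) :=
  rfl

theorem phiP_neg_eventuallyEq {x : ℝ} (hx : -1 < x) :
    phiP α β κ δ (-η) =ᶠ[𝓝 x] fun y => phiWeight α β δ η y
      * hypSecondSolution ((1 - δ + η - κ) / 2) ((1 - δ + η + κ) / 2) (1 + η)
        (((1 + y) / 2 : ℝ) : ℂ) := by
  filter_upwards [lt_mem_nhds hx] with y hy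
  have hU : (((1 + y) / 2 : ℝ) : ℂ) ≠ 0 := Complex.ofReal_ne_zero.2 (by linarith)
  simp only [phiP, phiWeight, hypSecondSolution]
  rw [show -((β : ℂ) - -η + 1) / 2 = -((β : ℂ) - η + 1) / 2 + (1 - (1 + η)) by ring,
    Complex.cpow_add _ _ hU]
  ring_nf

theorem differentiableAt_phiWeight {x : ℝ} (hx : x ∈ Set.Ioo (-1 : ℝ) 1) :
    DifferentiableAt ℝ (phiWeight α β δ η) x := by
  have hcpow {f : ℝ → ℝ} (hf : DifferentiableAt ℝ f x) (hpos : 0 < f x) (s : ℂ) :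
      DifferentiableAt ℝ (fun y => (f y : ℂ) ^ s) x :=
    (Complex.hasStrictDerivAt_cpow_const (Complex.ofReal_mem_slitPlane.2 hpos)).hasDerivAt
      |>.comp_ofReal.differentiableAt.comp x hf
  exact (hcpow (by fun_prop) (by linarith [hx.2]) _).mul
    (hcpow (by fun_prop) (by linarith [hx.1]) _)

end Eigenfunctions

theorem pfun_eq {α β x : ℝ} (hx : x ∈ Set.Ioo (-1 : ℝ) 1) :
    (pfun α β x : ℂ) = 2 * ((2 ^ (α + β + 3) * Cconst α β : ℝ) : ℂ)
      * (((1 - x) / 2 : ℝ) : ℂ) ^ ((α : ℂ) + 2) * (((1 + x) / 2 : ℝ) : ℂ) ^ ((β : ℂ) + 2) := by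
  have hv : 0 ≤ (1 - x) / 2 := by linarith [hx.2]
  have hu : 0 ≤ (1 + x) / 2 := by linarith [hx.1]
  have h2 : (2 : ℝ) ^ (α + 2) * 2 ^ (β + 2) = 2 * 2 ^ (α + β + 3) := by
    rw [← Real.rpow_add two_pos, show α + 2 + (β + 2) = 1 + (α + β + 3) by ring,
      Real.rpow_add two_pos, Real.rpow_one]
  have hsplit {t : ℝ} (ht : 0 ≤ t / 2) (s : ℝ) : t ^ s = 2 ^ s * (t / 2) ^ s := by
    rw [← Real.mul_rpow zero_le_two ht, mul_div_cancel₀ t two_ne_zero]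
  have hreal : pfun α β x
      = 2 * (2 ^ (α + β + 3) * Cconst α β) * ((1 - x) / 2) ^ (α + 2) * ((1 + x) / 2) ^ (β + 2) := by
    rw [pfun, hsplit hv, hsplit hu]
    linear_combination (Cconst α β * ((1 - x) / 2) ^ (α + 2) * ((1 + x) / 2) ^ (β + 2)) * h2
  rw [hreal, Complex.ofReal_mul, Complex.ofReal_mul, Complex.ofReal_cpow hv, Complex.ofReal_cpow hu]
  push_cast
  ring

theorem pfun_mul_phiWeight_sq {α β x : ℝ} {δ η : ℂ} (hx : x ∈ Set.Ioo (-1 : ℝ) 1) :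
    (pfun α β x : ℂ) * phiWeight α β δ η x ^ 2
        * ((((1 + x) / 2 : ℝ) : ℂ) ^ (-(1 + η)) * (((1 - x) / 2 : ℝ) : ℂ) ^ (δ - 1))
      = 2 * ((2 ^ (α + β + 3) * Cconst α β : ℝ) : ℂ) := by
  set u : ℂ := (((1 + x) / 2 : ℝ) : ℂ)
  set v : ℂ := (((1 - x) / 2 : ℝ) : ℂ)
  have hv_cancel := cpow_mul_cpow_mul_cpow_mul_cpow_eq_one (z := v)
    (Complex.ofReal_ne_zero.2 (by linarith [hx.2])) (p := (α : ℂ) + 2)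
    (q := -((α : ℂ) + δ + 1) / 2) (r := -((α : ℂ) + δ + 1) / 2) (s := δ - 1)
    (by ring)
  have hu_cancel := cpow_mul_cpow_mul_cpow_mul_cpow_eq_one (z := u)
    (Complex.ofReal_ne_zero.2 (by linarith [hx.1])) (p := (β : ℂ) + 2)
    (q := -((β : ℂ) - η + 1) / 2) (r := -((β : ℂ) - η + 1) / 2) (s := -(1 + η))
    (by ring)
  rw [pfun_eq hx, phiWeight]
  linear_combination 2 * ((2 ^ (α + β + 3) * Cconst α β : ℝ) : ℂ) *
    (u ^ ((β : ℂ) + 2) * u ^ (-((β : ℂ) - η + 1) / 2) * u ^ (-((β : ℂ) - η + 1) / 2)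
      * u ^ (-(1 + η)) * hv_cancel + hu_cancel)

theorem stmt_8_general (α β : ℝ) (κ δ η : ℂ)
    (hηZ : ∀ k : ℤ, η ≠ (k : ℂ)) :
    ∀ x ∈ Set.Ioo (-1 : ℝ) 1,
      (pfun α β x : ℂ) *
          (deriv (phiP α β κ δ (-η)) x * phiP α β κ δ η x
            - phiP α β κ δ (-η) x * deriv (phiP α β κ δ η) x)
        = -η * ((2 ^ (α + β + 3) * Cconst α β : ℝ) : ℂ) := by
  intro x hx
  set a := (1 - δ + η - κ) / 2 with ha
  set b := (1 - δ + η + κ) / 2 with hb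
  have hc₁ (k : ℕ) : 1 + η + k ≠ 0 := fun h => hηZ (-(k + 1)) (by push_cast; linear_combination h)
  have hc₂ (k : ℕ) : 2 - (1 + η) + k ≠ 0 := fun h =>
    hηZ (k + 1) (by push_cast; linear_combination -h)
  have hu : ‖(((1 + x) / 2 : ℝ) : ℂ)‖ < 1 := by
    rw [Complex.norm_real, Real.norm_of_nonneg (by linarith [hx.1])]; linarith [hx.2]
  have hu' : (((1 + x) / 2 : ℝ) : ℂ) ∈ Complex.slitPlane :=
    Complex.ofReal_mem_slitPlane.2 (by linarith [hx.1])
  have hφ := phiP_neg_eventuallyEq α β κ δ η hx.1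
  have hW := wronskian_mul_comp (U := fun y => (1 + y) / 2) (differentiableAt_phiWeight α β δ η hx)
    (((hasDerivAt_id x).const_add 1).div_const 2)
    (hasDerivAt_F21 (a := a) (b := b) hc₁ hu).differentiableAt
    (hasDerivAt_hypSecondSolution (a := a) (b := b) hc₂ hu hu').differentiableAt
  rw [hφ.deriv_eq, hφ.eq_of_nhds, phiP_eq_phiWeight_mul, hW,
    hypSecondSolution_wronskian hc₁ hc₂ hu hu', show 1 + η - a - b - 1 = δ - 1 by rw [ha, hb]; ring,
    show 1 - (((1 + x) / 2 : ℝ) : ℂ) = (((1 - x) / 2 : ℝ) : ℂ) by push_cast; ring,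
    show ((1 / 2 : ℝ) : ℂ) = 1 / 2 by push_cast; rfl]
  linear_combination (-η / 2) * pfun_mul_phiWeight_sq (δ := δ) (η := η) hx

/-- the weighted Wronskian `[φ⁻_λ, φ⁺_λ] = −η D`, with
`D = 2^{α+β+3} C`, at every point of `(-1,1)`. -/
theorem stmt_8 (α β : ℝ) (hα : -1 < α) (hβ : -1 < β) (κ lam δ η : ℂ)
    (hδ : δ ^ 2 = lam + ((α : ℂ) + 1) ^ 2) (hη : η ^ 2 = lam + ((β : ℂ) + 1) ^ 2)
    (hηZ : ∀ k : ℤ, η ≠ (k : ℂ)) :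
    ∀ x ∈ Set.Ioo (-1 : ℝ) 1,
      (pfun α β x : ℂ) *
          (deriv (phiP α β κ δ (-η)) x * phiP α β κ δ η x
            - phiP α β κ δ (-η) x * deriv (phiP α β κ δ η) x)
        = -η * ((2 ^ (α + β + 3) * Cconst α β : ℝ) : ℂ) :=
  stmt_8_general α β κ δ η hηZ
end
end

section
/- Let −1 < α ≤ β and let κ be either a nonnegative real number or a purely imaginary number (so κ² ∈ ℝ). Suppose f : (−1,1) → ℂ is twice continuously differentiable, satisfies (Tf)(x) = i·f(x) for all x ∈ (−1,1) (or satisfies (Tf)(x) = −i·f(x) for all x), and satisfies ∫_{−1}^1 |f(x)|² w^{(α,β)}(x) dx < ∞. Then f is identically zero. (Hence the minimal operator T has deficiency indices (0,0) and a unique self-adjoint extension.) -/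
noncomputable section
open MeasureTheory Asymptotics Filter

/-!
Write `p = w (1 - x²)²` and `ρ = |f|² w`. The operator has the Sturm–Liouville form
`w T f = (p f')' + w q f` with a real potential `q`, so for `T f = μ f` the quantity
`E = p f' f̄` satisfies `E' = (μ - q) ρ + p |f'|²`. Hence `Im E / Im μ` is nondecreasing with
derivative `ρ`, and if `f ≠ 0` somewhere, `|Im E| ≥ c > 0` near one endpoint; the endpoint `-1`
reduces to `1` under `x ↦ -x`, which swaps `α` and `β`.
Near `1`, `c ≤ p |f'| |f|` and AM–GM give `p |f'|² + ρ ≥ c / (1 - x)`, so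
`(Re E)' ≥ c / (1 - x) - L ρ` with `ρ` integrable, and `Re E → ∞`. Then
`(|f|²)' = 2 Re E / p ≳ (1 - x)^(-α-2)`, hence `|f|² ≳ (1 - x)^(-α-1)` and `ρ ≳ (1 - x)⁻¹`,
which is not integrable.
-/

open Set Topology ComplexConjugate

section Weights

variable {α β x : ℝ}

lemma Cconst_pos (hα : -1 < α) (hβ : -1 < β) : 0 < Cconst α β := by
  have := Real.Gamma_pos_of_pos (show 0 < α + 1 by linarith)
  have := Real.Gamma_pos_of_pos (show 0 < β + 1 by linarith)
  have := Real.Gamma_pos_of_pos (show 0 < α + β + 2 by linarith)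
  unfold Cconst
  positivity

lemma wJ_eq (α β x : ℝ) : wJ α β x = Cconst α β * (1 - x) ^ α * (1 + x) ^ β := rfl

lemma wJ_pos (hα : -1 < α) (hβ : -1 < β) (hx : x ∈ Ioo (-1 : ℝ) 1) : 0 < wJ α β x := by
  have := Cconst_pos hα hβ
  have : 0 < 1 - x := by linarith [hx.2]
  have : 0 < 1 + x := by linarith [hx.1]
  rw [wJ_eq]
  positivity

lemma pfun_eq_wJ_mul (hx : x ∈ Ioo (-1 : ℝ) 1) : pfun α β x = wJ α β x * (1 - x ^ 2) ^ 2 := by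
  have h₁ : 0 < 1 - x := by linarith [hx.2]
  have h₂ : 0 < 1 + x := by linarith [hx.1]
  rw [pfun, wJ_eq, Real.rpow_add h₁, Real.rpow_add h₂, Real.rpow_two, Real.rpow_two]
  ring

lemma pfun_pos (hα : -1 < α) (hβ : -1 < β) (hx : x ∈ Ioo (-1 : ℝ) 1) : 0 < pfun α β x := by
  have : 0 < 1 - x ^ 2 := by nlinarith [hx.1, hx.2]
  rw [pfun_eq_wJ_mul hx]
  have := wJ_pos hα hβ hx
  positivity

lemma wJ_continuousOn : ContinuousOn (wJ α β) (Ioo (-1 : ℝ) 1) := by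
  refine ((continuousOn_const.mul ?_).mul ?_)
  · exact (continuousOn_const.sub continuousOn_id).rpow_const
      fun x hx ↦ Or.inl (sub_pos.2 hx.2).ne'
  · exact (continuousOn_const.add continuousOn_id).rpow_const
      fun x hx ↦ Or.inl (neg_lt_iff_pos_add'.1 hx.1).ne'

lemma hasDerivAt_pfun (hx : x ∈ Ioo (-1 : ℝ) 1) :
    HasDerivAt (pfun α β) (wJ α β x * (1 - x ^ 2) * (β - α - (α + β + 4) * x)) x := by
  have h₁ : 0 < 1 - x := by linarith [hx.2]
  have h₂ : 0 < 1 + x := by linarith [hx.1]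
  have hu := ((hasDerivAt_id x).const_sub 1).rpow_const (p := α + 2) (Or.inl h₁.ne')
  have hv := ((hasDerivAt_id x).const_add 1).rpow_const (p := β + 2) (Or.inl h₂.ne')
  refine ((hu.const_mul (Cconst α β)).mul hv).congr_deriv ?_
  simp only [id, wJ_eq, show α + 2 - 1 = α + 1 by ring, show β + 2 - 1 = β + 1 by ring]
  rw [Real.rpow_add h₁, Real.rpow_add h₂, Real.rpow_add h₁, Real.rpow_add h₂]
  simp only [Real.rpow_one, Real.rpow_two]
  ring

lemma wJ_swap (α β x : ℝ) : wJ β α x = wJ α β (-x) := by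
  simp only [wJ, show -β - α - 1 = -α - β - 1 by ring, show β + α + 2 = α + β + 2 by ring,
    sub_neg_eq_add, ← sub_eq_add_neg]
  ring

lemma pfun_swap (α β x : ℝ) : pfun β α x = pfun α β (-x) := by
  simp only [pfun, Cconst, show -β - α - 1 = -α - β - 1 by ring,
    show β + α + 2 = α + β + 2 by ring, sub_neg_eq_add, ← sub_eq_add_neg]
  ring

lemma pfun_le (hα : -1 < α) (hβ : -1 < β) (hx : x ∈ Ico (0 : ℝ) 1) :
    pfun α β x ≤ Cconst α β * 2 ^ (β + 2) * (1 - x) ^ (α + 2) := by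
  have : (1 + x) ^ (β + 2) ≤ 2 ^ (β + 2) :=
    Real.rpow_le_rpow (by linarith [hx.1]) (by linarith [hx.2]) (by linarith)
  have : 0 ≤ Cconst α β * (1 - x) ^ (α + 2) := by
    have := Cconst_pos hα hβ
    have := Real.rpow_nonneg (sub_nonneg.2 hx.2.le) (α + 2)
    positivity
  rw [pfun]
  nlinarith

lemma le_wJ (hα : -1 < α) (hβ : -1 < β) (hx : x ∈ Ico (0 : ℝ) 1) :
    Cconst α β * min 1 (2 ^ β) * (1 - x) ^ α ≤ wJ α β x := by
  have h₁ : 1 ≤ 1 + x := by linarith [hx.1]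
  have h₂ : 1 + x ≤ 2 := by linarith [hx.2]
  have hmin : min 1 (2 ^ β) ≤ (1 + x) ^ β := by
    rcases le_total 0 β with hβ₀ | hβ₀
    · exact (min_le_left _ _).trans
        ((Real.one_rpow β).symm.le.trans (Real.rpow_le_rpow zero_le_one h₁ hβ₀))
    · exact (min_le_right _ _).trans (Real.rpow_le_rpow_of_nonpos (by linarith) h₂ hβ₀)
  have : 0 ≤ Cconst α β * (1 - x) ^ α := by
    have := Cconst_pos hα hβ
    have := Real.rpow_nonneg (sub_nonneg.2 hx.2.le) α
    positivity
  rw [wJ_eq]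
  nlinarith

end Weights

section RealAnalysis

lemma monotoneOn_of_hasDerivAt_nonneg {D : Set ℝ} {f f' : ℝ → ℝ} (hD : Convex ℝ D)
    (hf : ∀ x ∈ D, HasDerivAt f (f' x) x) (hf' : ∀ x ∈ D, 0 ≤ f' x) : MonotoneOn f D :=
  monotoneOn_of_hasDerivWithinAt_nonneg hD
    (fun x hx ↦ (hf x hx).continuousAt.continuousWithinAt)
    (fun x hx ↦ (hf x (interior_subset hx)).hasDerivWithinAt)
    fun x hx ↦ hf' x (interior_subset hx)

lemma exists_mem_Ioo_lt_of_hasDerivAt_pos {g : ℝ → ℝ} {g' x b : ℝ} (hg : HasDerivAt g g' x)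
    (hg' : 0 < g') (hxb : x < b) : ∃ y ∈ Ioo x b, g x < g y := by
  have hslope := ((hg.tendsto_slope.mono_left (nhdsGT_le_nhdsNE x)).eventually
    (eventually_gt_nhds hg'))
  obtain ⟨y, hy, hyb⟩ := (hslope.and (Ioo_mem_nhdsGT hxb)).exists
  rw [slope_def_field] at hy
  exact ⟨y, hyb, sub_pos.1 ((div_pos_iff_of_pos_right (sub_pos.2 hyb.1)).1 hy)⟩

lemma tendsto_one_sub_nhdsLT_one : Tendsto (fun x : ℝ ↦ 1 - x) (𝓝[<] 1) (𝓝[>] 0) :=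
  tendsto_nhdsWithin_of_tendsto_nhds_of_eventually_within _
    ((continuous_sub_left 1).tendsto' 1 0 (sub_self 1) |>.mono_left nhdsWithin_le_nhds)
    (eventually_nhdsWithin_of_forall fun _ hx ↦ mem_Ioi.2 (sub_pos.2 hx))

lemma tendsto_atTop_of_inv_one_sub_le_deriv_add {F F' ρ : ℝ → ℝ} {a c : ℝ} (ha : a < 1)
    (hc : 0 < c) (hF : ∀ x ∈ Ioo a 1, HasDerivAt F (F' x) x)
    (hρc : ContinuousOn ρ (Ioo a 1)) (hρi : IntegrableOn ρ (Ioo a 1))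
    (hρ₀ : ∀ x ∈ Ioo a 1, 0 ≤ ρ x) (hF' : ∀ x ∈ Ioo a 1, c * (1 - x)⁻¹ ≤ F' x + ρ x) :
    Tendsto F (𝓝[<] 1) atTop := by
  obtain ⟨b, hab, hb1⟩ := exists_between ha
  have hsub : Ico b 1 ⊆ Ioo a 1 := fun x hx ↦ ⟨hab.trans_le hx.1, hx.2⟩
  set G : ℝ → ℝ := fun x ↦ ∫ t in b..x, ρ t
  have hG : ∀ x ∈ Ico b 1, HasDerivAt G (ρ x) x := fun x hx ↦
    intervalIntegral.integral_hasDerivAt_right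
      ((intervalIntegrable_iff_integrableOn_Ioc_of_le hx.1).2
        (hρi.mono_set fun t ht ↦ hsub ⟨ht.1.le, ht.2.trans_lt hx.2⟩))
      (hρc.stronglyMeasurableAtFilter isOpen_Ioo x (hsub hx))
      (hρc.continuousAt (isOpen_Ioo.mem_nhds (hsub hx)))
  have hG_le : ∀ x ∈ Ico b 1, G x ≤ ∫ t in Ioo a 1, ρ t := fun x hx ↦ by
    simp only [G, intervalIntegral.integral_of_le hx.1]
    exact setIntegral_mono_set hρi ((ae_restrict_iff' measurableSet_Ioo).2 (ae_of_all _ hρ₀))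
      (Eventually.of_forall fun t ht ↦ hsub ⟨ht.1.le, ht.2.trans_lt hx.2⟩)
  have hlog : ∀ x ∈ Ico b 1,
      HasDerivAt (fun y ↦ c * Real.log (1 - y)) (c * ((-1) / (1 - x))) x := fun x hx ↦
    (((hasDerivAt_id x).const_sub 1).log (sub_pos.2 hx.2).ne').const_mul c
  have hmono : MonotoneOn (fun x ↦ F x + G x + c * Real.log (1 - x)) (Ico b 1) :=
    monotoneOn_of_hasDerivAt_nonneg (convex_Ico b 1)
      (fun x hx ↦ ((hF x (hsub hx)).add (hG x hx)).add (hlog x hx)) fun x hx ↦ by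
        have := hF' x (hsub hx)
        rw [neg_div, div_eq_mul_inv, one_mul]
        linarith
  set K := F b + G b + c * Real.log (1 - b) - ∫ t in Ioo a 1, ρ t
  have hlow : ∀ x ∈ Ico b 1, K - c * Real.log (1 - x) ≤ F x := fun x hx ↦ by
    have := hmono (left_mem_Ico.2 hb1) hx hx.1
    have := hG_le x hx
    simp only at *
    linarith
  have hlim : Tendsto (fun x : ℝ ↦ K - c * Real.log (1 - x)) (𝓝[<] 1) atTop := by
    simp only [sub_eq_add_neg, ← neg_mul, mul_comm (-c)]
    exact tendsto_atTop_add_const_left _ K <| Tendsto.atBot_mul_const_of_neg (neg_lt_zero.2 hc)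
      (Real.tendsto_log_nhdsGT_zero.comp tendsto_one_sub_nhdsLT_one)
  exact tendsto_atTop_mono' _ (mem_of_superset (Ico_mem_nhdsLT hb1) hlow) hlim

lemma eventually_rpow_le_of_rpow_le_deriv {u u' : ℝ → ℝ} {a k γ : ℝ} (ha : a < 1)
    (hk : 0 ≤ k) (hγ : 0 < γ) (hu : ∀ x ∈ Ioo a 1, HasDerivAt u (u' x) x)
    (hu₀ : ∀ x ∈ Ioo a 1, 0 ≤ u x) (hu' : ∀ x ∈ Ioo a 1, k * (1 - x) ^ (-(γ + 1)) ≤ u' x) :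
    ∀ᶠ x in 𝓝[<] 1, k / (2 * γ) * (1 - x) ^ (-γ) ≤ u x := by
  obtain ⟨b, hab, hb1⟩ := exists_between ha
  have hsub : Ico b 1 ⊆ Ioo a 1 := fun x hx ↦ ⟨hab.trans_le hx.1, hx.2⟩
  have hpow : ∀ x ∈ Ico b 1, HasDerivAt (fun y ↦ k / γ * (1 - y) ^ (-γ))
      (k * (1 - x) ^ (-(γ + 1))) x := fun x hx ↦ by
    refine ((((hasDerivAt_id x).const_sub 1).rpow_const
      (Or.inl (sub_pos.2 hx.2).ne')).const_mul (k / γ)).congr_deriv ?_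
    rw [show -γ - 1 = -(γ + 1) by ring]
    field_simp
    rfl
  have hmono : MonotoneOn (fun x ↦ u x - k / γ * (1 - x) ^ (-γ)) (Ico b 1) :=
    monotoneOn_of_hasDerivAt_nonneg (convex_Ico b 1)
      (fun x hx ↦ (hu x (hsub hx)).sub (hpow x hx)) fun x hx ↦ sub_nonneg.2 (hu' x (hsub hx))
  have hbig : ∀ᶠ x in 𝓝[<] 1, 2 * (1 - b) ^ (-γ) ≤ (1 - x) ^ (-γ) :=
    ((tendsto_rpow_neg_nhdsGT_zero (neg_lt_zero.2 hγ)).comp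
      tendsto_one_sub_nhdsLT_one).eventually_ge_atTop _
  filter_upwards [hbig, Ico_mem_nhdsLT hb1] with x hx hxb
  have := hmono (left_mem_Ico.2 hb1) hxb hxb.1
  have := hu₀ b (hsub (left_mem_Ico.2 hb1))
  have : 0 ≤ k / γ := div_nonneg hk hγ.le
  simp only at *
  rw [show k / (2 * γ) = k / γ / 2 by ring]
  nlinarith

lemma not_integrableOn_of_eventually_inv_one_sub_le {ρ : ℝ → ℝ} {s : Set ℝ} {c : ℝ}
    (hs : s ∈ 𝓝[<] (1 : ℝ)) (hc : 0 < c) (hρ : ∀ᶠ x in 𝓝[<] 1, c * (1 - x)⁻¹ ≤ ρ x) :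
    ¬ IntegrableOn ρ s := by
  intro hint
  obtain ⟨l, hl, hsub⟩ := mem_nhdsLT_iff_exists_Ioo_subset.1 (inter_mem hs hρ)
  have hl1 : l < 1 := hl
  have hmaj : IntegrableOn (fun x ↦ c * (1 - x)⁻¹) (Ioo l 1) :=
    Integrable.mono' (hint.mono_set fun x hx ↦ (hsub hx).1)
      (by fun_prop : Measurable fun x : ℝ ↦ c * (1 - x)⁻¹).aestronglyMeasurable
      ((ae_restrict_iff' measurableSet_Ioo).2 (ae_of_all _ fun x hx ↦ by
        rw [Real.norm_of_nonneg (mul_nonneg hc.le (inv_nonneg.2 (sub_pos.2 hx.2).le))]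
        exact (hsub hx).2))
  have hinv : IntervalIntegrable (fun x ↦ (x - 1)⁻¹) volume l 1 := by
    refine (intervalIntegrable_iff_integrableOn_Ioo_of_le hl1.le).2
      (IntegrableOn.congr_fun (hmaj.const_mul (-c⁻¹)) (fun x _ ↦ ?_) measurableSet_Ioo)
    rw [← neg_sub 1 x, inv_neg]
    field_simp
  rcases intervalIntegrable_sub_inv_iff.1 hinv with h | h
  · exact hl1.ne h
  · exact h right_mem_uIcc

end RealAnalysis

lemma HasDerivAt.complex_re {g : ℝ → ℂ} {g' : ℂ} {x : ℝ} (h : HasDerivAt g g' x) :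
    HasDerivAt (fun y ↦ (g y).re) g'.re x :=
  Complex.reCLM.hasFDerivAt.comp_hasDerivAt x h

lemma HasDerivAt.complex_im {g : ℝ → ℂ} {g' : ℂ} {x : ℝ} (h : HasDerivAt g g' x) :
    HasDerivAt (fun y ↦ (g y).im) g'.im x :=
  Complex.imCLM.hasFDerivAt.comp_hasDerivAt x h

section Energy

variable {α β : ℝ} {κ μ : ℂ} {f : ℝ → ℂ} {x : ℝ}

def potential (α β : ℝ) (κ : ℂ) (x : ℝ) : ℝ := ((κ ^ 2).re - (α + β + 3) ^ 2) / 4 * (1 - x ^ 2)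

def energy (α β : ℝ) (f : ℝ → ℂ) (x : ℝ) : ℂ := pfun α β x * deriv f x * conj (f x)

lemma hasDerivAt_of_contDiffOn (hf : ContDiffOn ℝ 2 f (Ioo (-1) 1)) (hx : x ∈ Ioo (-1 : ℝ) 1) :
    HasDerivAt f (deriv f x) x ∧ HasDerivAt (deriv f) (deriv (deriv f) x) x := by
  have hx' := isOpen_Ioo.mem_nhds hx
  refine ⟨((hf.differentiableOn (by norm_num)).differentiableAt hx').hasDerivAt, ?_⟩
  exact (((hf.deriv_of_isOpen isOpen_Ioo (by norm_num : (1 : WithTop ℕ∞) + 1 ≤ 2)).differentiableOn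
    one_ne_zero).differentiableAt hx').hasDerivAt

lemma hasDerivAt_pfun_mul_deriv (hκ : (κ ^ 2).im = 0) (hf : ContDiffOn ℝ 2 f (Ioo (-1) 1))
    (hx : x ∈ Ioo (-1 : ℝ) 1) :
    HasDerivAt (fun y ↦ (pfun α β y : ℂ) * deriv f y)
      (wJ α β x * (Tdiff α β κ f x - potential α β κ x * f x)) x := by
  refine ((hasDerivAt_pfun hx).ofReal_comp.mul (hasDerivAt_of_contDiffOn hf hx).2).congr_deriv ?_
  have hq : (potential α β κ x : ℂ) = 1 / 4 * (κ ^ 2 - (α + β + 3) ^ 2) * (1 - x ^ 2) := by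
    have hκ' : κ ^ 2 = ((κ ^ 2).re : ℂ) := Complex.ext rfl (by simp [hκ])
    rw [hκ']
    push_cast [potential]
    ring
  rw [Tdiff, hq, pfun_eq_wJ_mul hx]
  push_cast
  ring

lemma hasDerivAt_energy (hκ : (κ ^ 2).im = 0) (hf : ContDiffOn ℝ 2 f (Ioo (-1) 1))
    (heig : Tdiff α β κ f x = μ * f x) (hx : x ∈ Ioo (-1 : ℝ) 1) :
    HasDerivAt (energy α β f) ((μ - potential α β κ x) * (‖f x‖ ^ 2 * wJ α β x)
      + pfun α β x * ‖deriv f x‖ ^ 2) x := by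
  refine ((hasDerivAt_pfun_mul_deriv hκ hf hx).mul
    (hasDerivAt_of_contDiffOn hf hx).1.star).congr_deriv ?_
  simp only [heig, Complex.star_def]
  linear_combination (wJ α β x * (μ - potential α β κ x) : ℂ) * Complex.mul_conj' (f x)
    + (pfun α β x : ℂ) * Complex.mul_conj' (deriv f x)

lemma hasDerivAt_im_energy (hκ : (κ ^ 2).im = 0) (hf : ContDiffOn ℝ 2 f (Ioo (-1) 1))
    (heig : Tdiff α β κ f x = μ * f x) (hx : x ∈ Ioo (-1 : ℝ) 1) :
    HasDerivAt (fun y ↦ (energy α β f y).im) (μ.im * (‖f x‖ ^ 2 * wJ α β x)) x := by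
  refine (hasDerivAt_energy hκ hf heig hx).complex_im.congr_deriv ?_
  simp [← Complex.ofReal_pow]

lemma hasDerivAt_re_energy (hκ : (κ ^ 2).im = 0) (hf : ContDiffOn ℝ 2 f (Ioo (-1) 1))
    (heig : Tdiff α β κ f x = μ * f x) (hx : x ∈ Ioo (-1 : ℝ) 1) :
    HasDerivAt (fun y ↦ (energy α β f y).re)
      ((μ.re - potential α β κ x) * (‖f x‖ ^ 2 * wJ α β x) + pfun α β x * ‖deriv f x‖ ^ 2) x := by
  refine (hasDerivAt_energy hκ hf heig hx).complex_re.congr_deriv ?_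
  simp [← Complex.ofReal_pow]

lemma inv_one_sub_mul_le_of_le_abs_im_energy (hα : -1 < α) (hβ : -1 < β) {c : ℝ}
    (hx : x ∈ Ico (0 : ℝ) 1) (hc : c ≤ |(energy α β f x).im|) :
    c * (1 - x)⁻¹ ≤ pfun α β x * ‖deriv f x‖ ^ 2 + ‖f x‖ ^ 2 * wJ α β x := by
  have hx' : x ∈ Ioo (-1 : ℝ) 1 := ⟨by linarith [hx.1], hx.2⟩
  have h₁ : 0 < 1 - x := sub_pos.2 hx.2
  have hw := wJ_pos hα hβ hx'
  set a := ‖deriv f x‖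
  set b := ‖f x‖
  set y := (1 - x) * (1 + x) * a
  have hnorm : |(energy α β f x).im| ≤ wJ α β x * (1 - x) * ((1 + x) * y * b) := by
    refine (Complex.abs_im_le_norm _).trans (le_of_eq ?_)
    rw [energy, norm_mul, norm_mul, Complex.norm_conj, Complex.norm_real, Real.norm_of_nonneg
      (pfun_pos hα hβ hx').le, pfun_eq_wJ_mul hx']
    ring
  have hamgm : (1 + x) * y * b ≤ y ^ 2 + b ^ 2 := by
    have : 0 ≤ y * b := mul_nonneg (mul_nonneg (mul_nonneg h₁.le (by linarith [hx.1]))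
      (norm_nonneg _)) (norm_nonneg _)
    nlinarith [sq_nonneg (y - b), hx.2]
  have : c ≤ (pfun α β x * a ^ 2 + b ^ 2 * wJ α β x) * (1 - x) := by
    rw [pfun_eq_wJ_mul hx']
    calc c ≤ wJ α β x * (1 - x) * ((1 + x) * y * b) := hc.trans hnorm
      _ ≤ wJ α β x * (1 - x) * (y ^ 2 + b ^ 2) := by gcongr
      _ = _ := by ring
  rwa [← div_eq_mul_inv, div_le_iff₀ h₁]

end Energy

section Endpoints

variable {α β : ℝ} {κ μ : ℂ} {f : ℝ → ℂ}

lemma neg_le_sub_potential (μ : ℂ) {x : ℝ} (hx : x ∈ Ioo (-1 : ℝ) 1) :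
    -(|(κ ^ 2).re - (α + β + 3) ^ 2| / 4 + |μ.re|) ≤ μ.re - potential α β κ x := by
  have h₀ : 0 ≤ 1 - x ^ 2 := by nlinarith [hx.1, hx.2]
  have h₁ : 1 - x ^ 2 ≤ 1 := by nlinarith
  have : potential α β κ x ≤ |(κ ^ 2).re - (α + β + 3) ^ 2| / 4 := by
    rw [potential]
    nlinarith [le_abs_self ((κ ^ 2).re - (α + β + 3) ^ 2),
      neg_abs_le ((κ ^ 2).re - (α + β + 3) ^ 2)]
  linarith [neg_abs_le μ.re]

lemma tendsto_re_energy_atTop (hα : -1 < α) (hβ : -1 < β) (hκ : (κ ^ 2).im = 0)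
    (hf : ContDiffOn ℝ 2 f (Ioo (-1) 1)) (heig : ∀ x ∈ Ioo (-1 : ℝ) 1, Tdiff α β κ f x = μ * f x)
    (hL2 : IntegrableOn (fun x ↦ ‖f x‖ ^ 2 * wJ α β x) (Ioo (-1) 1)) {c : ℝ} (hc : 0 < c)
    (him : ∀ᶠ x in 𝓝[<] 1, c ≤ |(energy α β f x).im|) :
    Tendsto (fun x ↦ (energy α β f x).re) (𝓝[<] 1) atTop := by
  obtain ⟨l, hl, hlc⟩ := mem_nhdsLT_iff_exists_Ioo_subset.1 him
  have ha : max l 0 < 1 := max_lt hl one_pos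
  have hsub : Ioo (max l 0) 1 ⊆ Ioo (-1 : ℝ) 1 :=
    Ioo_subset_Ioo_left ((neg_one_lt_zero).le.trans (le_max_right _ _))
  set L := |(κ ^ 2).re - (α + β + 3) ^ 2| / 4 + |μ.re|
  refine tendsto_atTop_of_inv_one_sub_le_deriv_add ha hc
    (fun x hx ↦ hasDerivAt_re_energy hκ hf (heig x (hsub hx)) (hsub hx))
    (ρ := fun x ↦ (L + 1) * (‖f x‖ ^ 2 * wJ α β x))
    ((((hf.continuousOn.norm).pow 2).mul wJ_continuousOn).const_smul (L + 1) |>.mono hsub)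
    ((hL2.mono_set hsub).const_mul (L + 1))
    (fun x hx ↦ by have := (wJ_pos hα hβ (hsub hx)).le; positivity) fun x hx ↦ ?_
  have hρ : 0 ≤ ‖f x‖ ^ 2 * wJ α β x := by have := (wJ_pos hα hβ (hsub hx)).le; positivity
  have hpot : -L * (‖f x‖ ^ 2 * wJ α β x) ≤ (μ.re - potential α β κ x) * (‖f x‖ ^ 2 * wJ α β x) :=
    mul_le_mul_of_nonneg_right (neg_le_sub_potential μ (hsub hx)) hρ
  have := inv_one_sub_mul_le_of_le_abs_im_energy hα hβ
    ⟨(le_max_right _ _).trans hx.1.le, hx.2⟩ (hlc ⟨(le_max_left _ _).trans_lt hx.1, hx.2⟩)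
  linarith

lemma not_integrableOn_of_tendsto_re_energy (hα : -1 < α) (hβ : -1 < β)
    (hf : ContDiffOn ℝ 2 f (Ioo (-1) 1))
    (h : Tendsto (fun x ↦ (energy α β f x).re) (𝓝[<] 1) atTop) :
    ¬ IntegrableOn (fun x ↦ ‖f x‖ ^ 2 * wJ α β x) (Ioo (-1) 1) := by
  obtain ⟨l, hl, hlc⟩ := mem_nhdsLT_iff_exists_Ioo_subset.1 (h.eventually_ge_atTop 1)
  have ha : max l 0 < 1 := max_lt hl one_pos
  have hsub : Ioo (max l 0) 1 ⊆ Ioo (-1 : ℝ) 1 :=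
    Ioo_subset_Ioo_left ((neg_one_lt_zero).le.trans (le_max_right _ _))
  set P := Cconst α β * 2 ^ (β + 2)
  have hP : 0 < P := mul_pos (Cconst_pos hα hβ) (by positivity)
  have hu : ∀ x ∈ Ioo (max l 0) 1,
      HasDerivAt (fun y ↦ ‖f y‖ ^ 2) (2 * (deriv f x * conj (f x)).re) x := fun x hx ↦ by
    simpa only [Complex.inner] using (hasDerivAt_of_contDiffOn hf (hsub hx)).1.norm_sq
  have hu' : ∀ x ∈ Ioo (max l 0) 1,
      2 / P * (1 - x) ^ (-(α + 1 + 1)) ≤ 2 * (deriv f x * conj (f x)).re := fun x hx ↦ by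
    have hp := pfun_pos hα hβ (hsub hx)
    have hpP := pfun_le hα hβ (β := β) ⟨(le_max_right _ _).trans hx.1.le, hx.2⟩
    have hE : 1 ≤ (energy α β f x).re := hlc ⟨(le_max_left _ _).trans_lt hx.1, hx.2⟩
    rw [energy, mul_assoc, Complex.re_ofReal_mul] at hE
    have hs := Real.rpow_pos_of_pos (sub_pos.2 hx.2) (α + 2)
    rw [show -(α + 1 + 1) = -(α + 2) by ring, Real.rpow_neg (sub_pos.2 hx.2).le,
      ← div_eq_mul_inv, div_div, div_le_iff₀ (by positivity)]
    nlinarith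
  have hm : 0 < Cconst α β * min 1 (2 ^ β) :=
    mul_pos (Cconst_pos hα hβ) (lt_min one_pos (by positivity))
  have hK : 0 < 2 / P / (2 * (α + 1)) * (Cconst α β * min 1 (2 ^ β)) :=
    mul_pos (div_pos (div_pos two_pos hP) (by linarith)) hm
  refine not_integrableOn_of_eventually_inv_one_sub_le
    (Ioo_mem_nhdsLT (by norm_num : (-1 : ℝ) < 1)) hK ?_
  filter_upwards [eventually_rpow_le_of_rpow_le_deriv ha (by positivity) (by linarith) hu
    (fun _ _ ↦ by positivity) hu', Ioo_mem_nhdsLT ha] with x hfx hx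
  have hs : 0 < 1 - x := sub_pos.2 hx.2
  have hw := le_wJ hα hβ (β := β) ⟨(le_max_right _ _).trans hx.1.le, hx.2⟩
  have hpow : (1 - x) ^ (-(α + 1)) * (1 - x) ^ α = (1 - x)⁻¹ := by
    rw [← Real.rpow_add hs, show -(α + 1) + α = -1 by ring, Real.rpow_neg_one]
  calc 2 / P / (2 * (α + 1)) * (Cconst α β * min 1 (2 ^ β)) * (1 - x)⁻¹
      = 2 / P / (2 * (α + 1)) * (1 - x) ^ (-(α + 1))
          * (Cconst α β * min 1 (2 ^ β) * (1 - x) ^ α) := by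
        rw [← hpow]
        ring
    _ ≤ ‖f x‖ ^ 2 * wJ α β x :=
        mul_le_mul hfx hw (mul_pos hm (Real.rpow_pos_of_pos hs α)).le (by positivity)

lemma not_eventually_le_abs_im_energy_nhdsLT (hα : -1 < α) (hβ : -1 < β) (hκ : (κ ^ 2).im = 0)
    (hf : ContDiffOn ℝ 2 f (Ioo (-1) 1)) (heig : ∀ x ∈ Ioo (-1 : ℝ) 1, Tdiff α β κ f x = μ * f x)
    (hL2 : IntegrableOn (fun x ↦ ‖f x‖ ^ 2 * wJ α β x) (Ioo (-1) 1)) {c : ℝ} (hc : 0 < c) :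
    ¬ ∀ᶠ x in 𝓝[<] 1, c ≤ |(energy α β f x).im| := fun him ↦
  not_integrableOn_of_tendsto_re_energy hα hβ hf
    (tendsto_re_energy_atTop hα hβ hκ hf heig hL2 hc him) hL2

lemma Tdiff_comp_neg (α β : ℝ) (κ : ℂ) (f : ℝ → ℂ) (x : ℝ) :
    Tdiff β α κ (fun y ↦ f (-y)) x = Tdiff α β κ f (-x) := by
  have h₁ : deriv (fun y ↦ f (-y)) = fun y ↦ -deriv f (-y) := funext (deriv_comp_neg f)
  have h₂ : deriv (fun y ↦ -deriv f (-y)) x = deriv (deriv f) (-x) := by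
    rw [deriv.fun_neg, deriv_comp_neg, neg_neg]
  simp only [Tdiff, h₁, h₂]
  push_cast
  ring

lemma energy_comp_neg (α β : ℝ) (f : ℝ → ℂ) (x : ℝ) :
    energy β α (fun y ↦ f (-y)) x = -energy α β f (-x) := by
  rw [energy, energy, deriv_comp_neg, pfun_swap]
  ring

lemma not_eventually_le_abs_im_energy_nhdsGT (hα : -1 < α) (hβ : -1 < β) (hκ : (κ ^ 2).im = 0)
    (hf : ContDiffOn ℝ 2 f (Ioo (-1) 1)) (heig : ∀ x ∈ Ioo (-1 : ℝ) 1, Tdiff α β κ f x = μ * f x)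
    (hL2 : IntegrableOn (fun x ↦ ‖f x‖ ^ 2 * wJ α β x) (Ioo (-1) 1)) {c : ℝ} (hc : 0 < c) :
    ¬ ∀ᶠ x in 𝓝[>] (-1), c ≤ |(energy α β f x).im| := fun him ↦ by
  have hmaps : MapsTo (fun y : ℝ ↦ -y) (Ioo (-1) 1) (Ioo (-1) 1) := fun y hy ↦
    ⟨by linarith [hy.2], by linarith [hy.1]⟩
  refine not_eventually_le_abs_im_energy_nhdsLT (f := fun y ↦ f (-y)) hβ hα hκ
    (hf.comp contDiff_neg.contDiffOn hmaps)
    (fun x hx ↦ by rw [Tdiff_comp_neg, heig _ (hmaps hx)]) ?_ hc ?_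
  · have := hL2.comp_neg
    rw [neg_Ioo, neg_neg] at this
    simpa only [wJ_swap α β] using this
  · have := tendsto_neg_nhdsLT_neg (a := (-1 : ℝ))
    rw [neg_neg] at this
    filter_upwards [this.eventually him] with x hx
    rwa [energy_comp_neg, Complex.neg_im, abs_neg]

end Endpoints

theorem eq_zero_of_Tdiff_eq_mul {α β : ℝ} {κ μ : ℂ} {f : ℝ → ℂ} (hα : -1 < α) (hβ : -1 < β)
    (hκ : (κ ^ 2).im = 0) (hμ : μ.im ≠ 0) (hf : ContDiffOn ℝ 2 f (Ioo (-1) 1))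
    (heig : ∀ x ∈ Ioo (-1 : ℝ) 1, Tdiff α β κ f x = μ * f x)
    (hL2 : IntegrableOn (fun x ↦ ‖f x‖ ^ 2 * wJ α β x) (Ioo (-1) 1)) :
    ∀ x ∈ Ioo (-1 : ℝ) 1, f x = 0 := by
  set g := fun x ↦ (energy α β f x).im / μ.im
  have hg : ∀ x ∈ Ioo (-1 : ℝ) 1, HasDerivAt g (‖f x‖ ^ 2 * wJ α β x) x := fun x hx ↦
    ((hasDerivAt_im_energy hκ hf (heig x hx) hx).div_const μ.im).congr_deriv (by field_simp)
  have hmono : MonotoneOn g (Ioo (-1) 1) :=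
    monotoneOn_of_hasDerivAt_nonneg (convex_Ioo _ _) hg fun x hx ↦
      mul_nonneg (by positivity) (wJ_pos hα hβ hx).le
  have hbound : ∀ {c x}, c ≤ |g x| → c * |μ.im| ≤ |(energy α β f x).im| := fun h ↦ by
    rw [abs_div] at h
    rwa [le_div_iff₀ (abs_pos.2 hμ)] at h
  intro x₀ hx₀
  by_contra hf₀
  rcases lt_or_ge (g x₀) 0 with hneg | hnonneg
  · refine not_eventually_le_abs_im_energy_nhdsGT hα hβ hκ hf heig hL2
      (mul_pos (neg_pos.2 hneg) (abs_pos.2 hμ)) ?_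
    filter_upwards [Ioo_mem_nhdsGT hx₀.1] with x hx
    have := hmono ⟨hx.1, hx.2.trans hx₀.2⟩ hx₀ hx.2.le
    exact hbound (by rw [abs_of_neg (by linarith)]; linarith)
  · obtain ⟨b, hb, hgb⟩ := exists_mem_Ioo_lt_of_hasDerivAt_pos (hg x₀ hx₀)
      (mul_pos (by positivity) (wJ_pos hα hβ hx₀)) hx₀.2
    refine not_eventually_le_abs_im_energy_nhdsLT hα hβ hκ hf heig hL2
      (mul_pos (hnonneg.trans_lt hgb) (abs_pos.2 hμ)) ?_
    filter_upwards [Ioo_mem_nhdsLT hb.2] with x hx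
    have := hmono ⟨hx₀.1.trans hb.1, hb.2⟩ ⟨hx₀.1.trans (hb.1.trans hx.1), hx.2⟩ hx.1.le
    exact hbound (by rw [abs_of_pos (by linarith)]; linarith)

/-- there are no square-integrable eigenfunctions of `T` for the
eigenvalues `±i`; hence the deficiency indices are `(0,0)` and `T` is
essentially self-adjoint. -/
theorem stmt_10 (α β : ℝ) (hα : -1 < α) (hαβ : α ≤ β) (κ : ℂ)
    (hκ : (κ.im = 0 ∧ 0 ≤ κ.re) ∨ κ.re = 0)
    (f : ℝ → ℂ) (hf : ContDiffOn ℝ 2 f (Set.Ioo (-1 : ℝ) 1))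
    (heig : (∀ x ∈ Set.Ioo (-1 : ℝ) 1, Tdiff α β κ f x = Complex.I * f x) ∨
            (∀ x ∈ Set.Ioo (-1 : ℝ) 1, Tdiff α β κ f x = -Complex.I * f x))
    (hL2 : MeasureTheory.IntegrableOn (fun x => ‖f x‖ ^ 2 * wJ α β x) (Set.Ioo (-1 : ℝ) 1)) :
    ∀ x ∈ Set.Ioo (-1 : ℝ) 1, f x = 0 := by
  have hκ' : (κ ^ 2).im = 0 := by
    rcases hκ with ⟨h, -⟩ | h <;> simp [pow_two, h]
  rcases heig with heig | heig
  · exact eq_zero_of_Tdiff_eq_mul hα (hα.trans_le hαβ) hκ' (by simp) hf heig hL2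
  · exact eq_zero_of_Tdiff_eq_mul hα (hα.trans_le hαβ) hκ' (by simp) hf heig hL2
end
end

section
/- Let −1 < α ≤ β, let κ ∈ ℝ, and let n ∈ ℕ be such that s := κ − 2n − 1 > 0 and s² ≥ (β−α)(α+β+2). Define λ_n = ( s/2 + (α−β)(α+β+2)/(2s) )² − (α+1)². Then λ_n + (α+1)² ≥ 0 and λ_n + (β+1)² ≥ 0, the identity √(λ_n + (α+1)²) + √(λ_n + (β+1)²) = κ − 2n − 1 holds, and moreover λ_n = ( s/2 − (α−β)(α+β+2)/(2s) )² − (β+1)². -/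
noncomputable section
open MeasureTheory Asymptotics Filter

/-! With `d = (α+1)² − (β+1)² = (α−β)(α+β+2)`, the two numbers `u = s/2 + d/(2s)` and
`v = s/2 − d/(2s)` satisfy `u + v = s` and `u² − v² = d`, so `λ := u² − (α+1)² = v² − (β+1)²`.
The hypotheses make `−s² ≤ d ≤ 0`, which is exactly `u, v ≥ 0`; hence `√(λ+(α+1)²) = u`,
`√(λ+(β+1)²) = v`, and their sum is `s`. -/

lemma sq_add_div_sub_sq_sub_div {s : ℝ} (hs : s ≠ 0) (d : ℝ) :
    (s / 2 + d / (2 * s)) ^ 2 - (s / 2 - d / (2 * s)) ^ 2 = d := by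
  field_simp
  ring

lemma half_add_div_nonneg {s d : ℝ} (hs : 0 < s) (hd : -s ^ 2 ≤ d) :
    0 ≤ s / 2 + d / (2 * s) := by
  have h : s / 2 + d / (2 * s) = (s ^ 2 + d) / (2 * s) := by
    field_simp
  rw [h]
  exact div_nonneg (by linarith) (by linarith)

lemma half_sub_div_nonneg {s d : ℝ} (hs : 0 < s) (hd : d ≤ 0) :
    0 ≤ s / 2 - d / (2 * s) := by
  have : d / (2 * s) ≤ 0 := div_nonpos_of_nonpos_of_nonneg hd (by linarith)
  linarith

/-- the explicit formula for the discrete spectral point `λ_n`,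
the real solution of `√(λ+(α+1)²) + √(λ+(β+1)²) = κ − 2n − 1`. -/
theorem stmt_11 (α β κ : ℝ) (hα : -1 < α) (hαβ : α ≤ β) (n : ℕ) (s : ℝ)
    (hs : s = κ - 2 * n - 1) (hspos : 0 < s) (hs2 : (β - α) * (α + β + 2) ≤ s ^ 2)
    (lamn : ℝ)
    (hlam : lamn = (s / 2 + (α - β) * (α + β + 2) / (2 * s)) ^ 2 - (α + 1) ^ 2) :
    0 ≤ lamn + (α + 1) ^ 2 ∧ 0 ≤ lamn + (β + 1) ^ 2 ∧
    Real.sqrt (lamn + (α + 1) ^ 2) + Real.sqrt (lamn + (β + 1) ^ 2) = κ - 2 * n - 1 ∧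
    lamn = (s / 2 - (α - β) * (α + β + 2) / (2 * s)) ^ 2 - (β + 1) ^ 2 := by
  set d := (α - β) * (α + β + 2)
  have hd_nonpos : d ≤ 0 := mul_nonpos_of_nonpos_of_nonneg (by linarith) (by linarith)
  have hu : 0 ≤ s / 2 + d / (2 * s) := half_add_div_nonneg hspos (by linarith)
  have hv : 0 ≤ s / 2 - d / (2 * s) := half_sub_div_nonneg hspos hd_nonpos
  have hlam' : lamn = (s / 2 - d / (2 * s)) ^ 2 - (β + 1) ^ 2 := by
    rw [hlam]
    linear_combination sq_add_div_sub_sq_sub_div hspos.ne' d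
  have hα_sq : lamn + (α + 1) ^ 2 = (s / 2 + d / (2 * s)) ^ 2 := by rw [hlam]; ring
  have hβ_sq : lamn + (β + 1) ^ 2 = (s / 2 - d / (2 * s)) ^ 2 := by rw [hlam']; ring
  refine ⟨hα_sq ▸ sq_nonneg _, hβ_sq ▸ sq_nonneg _, ?_, hlam'⟩
  rw [hα_sq, hβ_sq, Real.sqrt_sq hu, Real.sqrt_sq hv, ← hs]
  ring
end
end

section
/- Let −1 < α ≤ β and let κ ≥ 0 be real. For λ < −(β+1)² set δ_λ = i√(−λ−(α+1)²) and η_λ = i√(−λ−(β+1)²). Then as λ → −∞: (i) c(δ_λ; η_λ) = O(e^{−π√(−λ)}), and (ii) c(−δ_λ; η_λ) = O(1). -/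
noncomputable section
open MeasureTheory Asymptotics Filter

/-- `δ_λ = i√(−λ−(α+1)²)`. -/
def deltaC (α : ℝ) (lam : ℝ) : ℂ :=
  Complex.I * ((Real.sqrt (-lam - (α + 1) ^ 2) : ℝ) : ℂ)

/-- `η_λ = i√(−λ−(β+1)²)`. -/
def etaC (β : ℝ) (lam : ℝ) : ℂ :=
  Complex.I * ((Real.sqrt (-lam - (β + 1) ^ 2) : ℝ) : ℂ)

/-! For `x = iσ`, `y = it` the two Gamma factors in the denominator of `c(x;y)` are `Γ(z)` and
`Γ(1 - z̄)` with `z = (1+κ)/2 + i(t-σ)/2`, so by the reflection formula their product has modulus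
`π / |sin πz| ≥ π e^{-π|t-σ|/2}`. The numerator is explicit: `|Γ(1+it)|² = πt / sinh πt` and
`|Γ(iσ)|² = π / (σ sinh πσ)`. Together, `|c(iσ;it)| ≤ 4 e^{π(|t-σ| - t - |σ|)/2}` whenever
`1 ≤ t ≤ |σ|`. With `t = √(-λ-(β+1)²)` and `σ = ±√(-λ-(α+1)²)` the exponent is `-πt` for `δ_λ`
and `0` for `-δ_λ`. -/

open Complex Real ComplexConjugate

lemma Complex.norm_sin_le_exp_abs_im (z : ℂ) : ‖sin z‖ ≤ Real.exp |z.im| := by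
  have h₁ : ‖cexp (-z * I)‖ ≤ Real.exp |z.im| := by
    rw [norm_exp]; gcongr; simpa using le_abs_self z.im
  have h₂ : ‖cexp (z * I)‖ ≤ Real.exp |z.im| := by
    rw [norm_exp]; gcongr; simpa using neg_le_abs z.im
  calc ‖sin z‖ = ‖cexp (-z * I) - cexp (z * I)‖ / 2 := by simp [sin]
    _ ≤ (‖cexp (-z * I)‖ + ‖cexp (z * I)‖) / 2 := by gcongr; exact norm_sub_le _ _
    _ ≤ Real.exp |z.im| := by linarith

lemma Complex.norm_Gamma_mul_Gamma_one_sub_conj (z : ℂ) :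
    ‖Gamma z * Gamma (1 - conj z)‖ = π / ‖sin (π * z)‖ := by
  rw [show 1 - conj z = conj (1 - z) by simp, Gamma_conj, norm_mul, norm_conj, ← norm_mul,
    Gamma_mul_Gamma_one_sub, norm_div, norm_real, Real.norm_of_nonneg pi_pos.le]

lemma Complex.sq_norm_Gamma_mul_I {σ : ℝ} (hσ : σ ≠ 0) :
    ‖Gamma (σ * I)‖ ^ 2 = π / (σ * Real.sinh (π * σ)) := by
  have hσI : -(σ * I) ≠ 0 := by simp [hσ]
  have hsinh : Real.sinh (π * σ) ≠ 0 := by simp [Real.sinh_eq_zero, pi_ne_zero, hσ]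
  have hrefl := Gamma_mul_Gamma_one_sub (σ * I)
  rw [sub_eq_neg_add, Gamma_add_one _ hσI, ← mul_assoc,
    show π * (σ * I) = ((π * σ : ℝ) : ℂ) * I by push_cast; ring, sin_mul_I,
    ← ofReal_sinh, show -(σ * I) = conj (σ * I) by simp, Gamma_conj, mul_right_comm,
    mul_conj, ← Complex.sq_norm, map_mul, conj_ofReal, conj_I] at hrefl
  rw [eq_div_iff (mul_ne_zero (ofReal_ne_zero.2 hsinh) I_ne_zero)] at hrefl
  rw [eq_div_iff (mul_ne_zero hσ hsinh)]
  have : ((‖Gamma (σ * I)‖ ^ 2 : ℝ) : ℂ) * (σ * (Real.sinh (π * σ) : ℂ)) = π := by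
    linear_combination hrefl + ((‖Gamma (σ * I)‖ ^ 2 : ℝ) * σ * Real.sinh (π * σ) : ℂ) * I_sq
  exact_mod_cast this

lemma Complex.sq_norm_Gamma_one_add_mul_I {t : ℝ} (ht : t ≠ 0) :
    ‖Gamma (1 + t * I)‖ ^ 2 = π * t / Real.sinh (π * t) := by
  rw [add_comm, Gamma_add_one _ (by simp [ht]), norm_mul, mul_pow, sq_norm_Gamma_mul_I ht,
    norm_mul, norm_I, norm_real, Real.norm_eq_abs, mul_one, sq_abs]
  field_simp

lemma Real.inv_sinh_le_four_mul_exp_neg {x : ℝ} (hx : 1 / 2 ≤ x) :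
    (sinh x)⁻¹ ≤ 4 * exp (-x) := by
  have h2 : 2 ≤ exp x * exp x := by rw [← exp_add]; linarith [add_one_le_exp (x + x)]
  have hsinh : exp x / 4 ≤ sinh x := by
    rw [sinh_eq, exp_neg]
    have := exp_pos x
    field_simp
    nlinarith
  calc (sinh x)⁻¹ ≤ (exp x / 4)⁻¹ := inv_anti₀ (by positivity) hsinh
    _ = 4 * exp (-x) := by rw [inv_div, exp_neg, div_eq_mul_inv]

lemma Complex.norm_Gamma_one_add_mul_I_mul_Gamma_mul_I_le {t σ : ℝ} (ht : 1 ≤ t)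
    (htσ : t ≤ |σ|) :
    ‖Gamma (1 + t * I) * Gamma (σ * I)‖ ≤ 4 * π * Real.exp (-(π * (t + |σ|)) / 2) := by
  have hσ : 0 < |σ| := by linarith
  have heven : σ * Real.sinh (π * σ) = |σ| * Real.sinh (π * |σ|) := by
    rcases abs_cases σ with ⟨h, _⟩ | ⟨h, _⟩ <;> simp [h, Real.sinh_neg]
  have hπ := pi_gt_three
  have ht' := Real.inv_sinh_le_four_mul_exp_neg (x := π * t) (by nlinarith)
  have hσ' := Real.inv_sinh_le_four_mul_exp_neg (x := π * |σ|) (by nlinarith)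
  rw [← pow_le_pow_iff_left₀ (norm_nonneg _) (by positivity) two_ne_zero, norm_mul, mul_pow,
    sq_norm_Gamma_one_add_mul_I (by positivity), sq_norm_Gamma_mul_I (abs_pos.1 hσ), heven]
  calc π * t / Real.sinh (π * t) * (π / (|σ| * Real.sinh (π * |σ|)))
      = π ^ 2 * (t / |σ|) * (Real.sinh (π * t))⁻¹ * (Real.sinh (π * |σ|))⁻¹ := by ring
    _ ≤ π ^ 2 * 1 * (4 * Real.exp (-(π * t))) * (4 * Real.exp (-(π * |σ|))) := by
        gcongr
        exact (div_le_one hσ).2 htσ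
    _ = (4 * π * Real.exp (-(π * (t + |σ|)) / 2)) ^ 2 := by
        rw [mul_pow, sq (Real.exp _), ← Real.exp_add,
          show -(π * (t + |σ|)) / 2 + -(π * (t + |σ|)) / 2 = -(π * t) + -(π * |σ|) by ring,
          Real.exp_add]
        ring

lemma norm_cfun_I_mul_le (κ t σ : ℝ) (ht : 1 ≤ t) (htσ : t ≤ |σ|) :
    ‖cfun κ (I * σ) (I * t)‖ ≤ 4 * Real.exp (π * (|t - σ| - t - |σ|) / 2) := by
  set z : ℂ := ((1 + κ) / 2 : ℝ) + ((t - σ) / 2 : ℝ) * I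
  have hz : (1 + I * t - I * σ + κ) / 2 = z := by push_cast [z]; ring
  have hz' : (1 + I * t - I * σ - κ) / 2 = 1 - conj z := by
    simp only [z, map_add, map_mul, conj_ofReal, conj_I]; push_cast; ring
  have hsin : ‖sin (π * z)‖ ≤ Real.exp (π * |t - σ| / 2) := by
    refine (norm_sin_le_exp_abs_im _).trans_eq ?_
    simp [z, abs_mul, abs_div, abs_of_pos pi_pos, mul_div_assoc]
  have hnum :
      ‖Gamma (1 + I * t) * Gamma (-(I * σ))‖ ≤ 4 * π * Real.exp (-(π * (t + |σ|)) / 2) := by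
    have := norm_Gamma_one_add_mul_I_mul_Gamma_mul_I_le (σ := -σ) ht (by rwa [abs_neg])
    rw [abs_neg] at this
    convert this using 5 <;> push_cast <;> ring
  unfold cfun
  rw [hz, hz', norm_div, norm_Gamma_mul_Gamma_one_sub_conj, div_div_eq_mul_div]
  calc ‖Gamma (1 + I * t) * Gamma (-(I * σ))‖ * ‖sin (π * z)‖ / π
      ≤ 4 * π * Real.exp (-(π * (t + |σ|)) / 2) * Real.exp (π * |t - σ| / 2) / π := by gcongr
    _ = 4 * Real.exp (π * (|t - σ| - t - |σ|) / 2) := by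
      rw [mul_assoc, ← Real.exp_add]
      field_simp
      ring_nf

lemma norm_cfun_I_mul_le_exp_neg (κ : ℝ) {t s : ℝ} (ht : 1 ≤ t) (hts : t ≤ s) :
    ‖cfun κ (I * s) (I * t)‖ ≤ 4 * Real.exp (-(π * t)) := by
  have hs : 0 ≤ s := by linarith
  have hc := norm_cfun_I_mul_le κ t s ht (by rwa [abs_of_nonneg hs])
  rwa [abs_of_nonneg hs, abs_of_nonpos (by linarith : t - s ≤ 0),
    show π * (-(t - s) - t - s) / 2 = -(π * t) by ring] at hc

lemma norm_cfun_neg_I_mul_le (κ : ℝ) {t s : ℝ} (ht : 1 ≤ t) (hts : t ≤ s) :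
    ‖cfun κ (-(I * s)) (I * t)‖ ≤ 4 := by
  have hs : 0 ≤ s := by linarith
  have hc := norm_cfun_I_mul_le κ t (-s) ht (by rwa [abs_neg, abs_of_nonneg hs])
  rwa [abs_neg, abs_of_nonneg hs, sub_neg_eq_add, abs_of_nonneg (by linarith : 0 ≤ t + s),
    show π * (t + s - t - s) / 2 = 0 by ring, Real.exp_zero, mul_one, ofReal_neg, mul_neg] at hc

lemma Real.sqrt_le_sqrt_sub_sq_add {b : ℝ} (hb : 0 ≤ b) (x : ℝ) : √x ≤ √(x - b ^ 2) + b := by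
  rw [Real.sqrt_le_left (by positivity)]
  nlinarith [Real.sq_sqrt' (x := x - b ^ 2), le_max_left (x - b ^ 2) 0,
    Real.sqrt_nonneg (x - b ^ 2)]

lemma eventually_one_le_sqrt_neg_sub_sq_le {a b : ℝ} (hab : a ^ 2 ≤ b ^ 2) :
    ∀ᶠ lam in atBot, 1 ≤ √(-lam - b ^ 2) ∧ √(-lam - b ^ 2) ≤ √(-lam - a ^ 2) := by
  filter_upwards [eventually_le_atBot (-(b ^ 2 + 1))] with lam hlam
  exact ⟨Real.one_le_sqrt.2 (by linarith), Real.sqrt_le_sqrt (by linarith)⟩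

theorem stmt_18_general (α β κ : ℝ) (hα : -1 < α) (hαβ : α ≤ β) :
    (fun lam : ℝ => cfun (κ : ℂ) (deltaC α lam) (etaC β lam))
      =O[atBot] (fun lam : ℝ => Real.exp (-Real.pi * Real.sqrt (-lam))) ∧
    (fun lam : ℝ => cfun (κ : ℂ) (-(deltaC α lam)) (etaC β lam))
      =O[atBot] (fun _ : ℝ => (1 : ℝ)) := by
  have hβ : 0 ≤ β + 1 := by linarith
  have hev := eventually_one_le_sqrt_neg_sub_sq_le (a := α + 1) (b := β + 1) (by nlinarith)
  constructor
  · refine isBigO_iff.2 ⟨4 * Real.exp (π * (β + 1)), ?_⟩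
    filter_upwards [hev] with lam ⟨ht, hts⟩
    have hsqrt := Real.sqrt_le_sqrt_sub_sq_add hβ (-lam)
    rw [Real.norm_of_nonneg (Real.exp_pos _).le]
    calc ‖cfun κ (deltaC α lam) (etaC β lam)‖
        ≤ 4 * Real.exp (-(π * √(-lam - (β + 1) ^ 2))) := norm_cfun_I_mul_le_exp_neg κ ht hts
      _ ≤ 4 * Real.exp (π * (β + 1) + -π * √(-lam)) := by gcongr; nlinarith [pi_pos]
      _ = 4 * Real.exp (π * (β + 1)) * Real.exp (-π * √(-lam)) := by
        rw [Real.exp_add, mul_assoc]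
  · refine isBigO_iff.2 ⟨4, ?_⟩
    filter_upwards [hev] with lam ⟨ht, hts⟩
    rw [norm_one, mul_one]
    exact norm_cfun_neg_I_mul_le κ ht hts

/-- asymptotic behavior of the `c`-functions as `λ → −∞`:
`c(δ_λ;η_λ) = O(e^{−π√(−λ)})` and `c(−δ_λ;η_λ) = O(1)`. -/
theorem stmt_18 (α β κ : ℝ) (hα : -1 < α) (hαβ : α ≤ β) (hκ : 0 ≤ κ) :
    (fun lam : ℝ => cfun (κ : ℂ) (deltaC α lam) (etaC β lam))
      =O[atBot] (fun lam : ℝ => Real.exp (-Real.pi * Real.sqrt (-lam))) ∧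
    (fun lam : ℝ => cfun (κ : ℂ) (-(deltaC α lam)) (etaC β lam))
      =O[atBot] (fun _ : ℝ => (1 : ℝ)) :=
  stmt_18_general α β κ hα hαβ
end
end
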